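/- arXiv:math/0606124 — 2 statements merged into one kernel-verified Lean document; each statement's English description precedes it below -/
import Mathlib

section
/- Let C = C_1,…,C_p be a coherent autoreduced set in the ordinary differential polynomial ring k{y_1,…,y_l} with respect to an orderly ranking, with 1 ∉ [C]:H_C^∞, and let h be an integer with h ≥ ord C_s for every 1 ≤ s ≤ p. Then the intersection of [C]:H_C^∞ with the polynomial subring k[y_i^{(j)} : 1 ≤ i ≤ l, 0 ≤ j ≤ h] equals the saturation (δ^q C_s : 1 ≤ s ≤ p, q ≥ 0, ord(δ^q u_{C_s}) ≤ h) : H_C^∞ computed in the polynomial ring k[y_i^{(j)} : 1 ≤ i ≤ l, 0 ≤ j ≤ h]. -/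
open MvPolynomial

namespace DiffAlg

/-! ### Generic commutative-algebra notions -/

section Commutative

variable {R : Type*} [CommRing R]

/-- `I : S^∞`, the saturation of the ideal `I` by the multiplicative set generated by `S`. -/
def sat (I : Ideal R) (S : Set R) : Set R :=
  {a | ∃ s ∈ Submonoid.closure S, s * a ∈ I}

/-- The ideal generated by `G` inside the subring whose carrier is the set `A`
(coefficients are taken from `A`), viewed as a set. -/
def spanIn (A G : Set R) : Set R :=
  {x | ∃ (m : ℕ) (c g : Fin m → R), (∀ i, c i ∈ A) ∧ (∀ i, g i ∈ G) ∧ x = ∑ i, c i * g i}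

/-- The saturation `(G) : S^∞` computed inside the subring whose carrier is the set `A`. -/
def satIn (A G S : Set R) : Set R :=
  {x | x ∈ A ∧ ∃ s ∈ Submonoid.closure S, s * x ∈ spanIn A G}

variable {ι : Type*}

/-- `I` is a differential ideal w.r.t. the family of derivations `D`. -/
def IsDiffIdeal (D : ι → R → R) (I : Ideal R) : Prop :=
  ∀ j, ∀ f ∈ I, D j f ∈ I

/-- `[F]`, the smallest differential ideal containing `F`. -/
def diffIdeal (D : ι → R → R) (F : Set R) : Ideal R :=
  sInf {I : Ideal R | F ⊆ I ∧ IsDiffIdeal D I}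

/-- `{F}`, the smallest radical differential ideal containing `F`. -/
def radDiffIdeal (D : ι → R → R) (F : Set R) : Ideal R :=
  sInf {I : Ideal R | F ⊆ I ∧ IsDiffIdeal D I ∧ I.IsRadical}

/-- A differential ideal for a single derivation. -/
def IsDiffIdeal1 (D : R → R) (I : Ideal R) : Prop := IsDiffIdeal (fun _ : Unit => D) I

/-- `[F]` for a single derivation. -/
def diffIdeal1 (D : R → R) (F : Set R) : Ideal R := diffIdeal (fun _ : Unit => D) F

/-- `{F}` for a single derivation. -/
def radDiffIdeal1 (D : R → R) (F : Set R) : Ideal R := radDiffIdeal (fun _ : Unit => D) F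

end Commutative

/-! ### Leaders, initials, separants, autoreduced sets, characteristic sets,
for a polynomial ring whose variables carry a ranking `rle` and a
"proper derivative" relation `pd`. -/

section CharSets

variable {k : Type*} [CommRing k] {σ : Type*} [DecidableEq σ]
variable (rle : σ → σ → Prop) (pd : σ → σ → Prop)

/-- The strict order associated with the ranking `rle`. -/
def rlt (u v : σ) : Prop := rle u v ∧ u ≠ v

/-- `u` is the leader of `f`: the highest ranked variable occurring in `f`. -/
def IsLeader (f : MvPolynomial σ k) (u : σ) : Prop :=
  u ∈ f.vars ∧ ∀ v ∈ f.vars, rle v u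

/-- The leader of `f` (meaningful when `f` is not a constant). -/
noncomputable def leader [Nonempty σ] (f : MvPolynomial σ k) : σ :=
  Classical.epsilon (IsLeader rle f)

/-- The initial of `f` w.r.t. the variable `u`: the leading coefficient of `f`
viewed as a univariate polynomial in `u`. -/
noncomputable def initial (u : σ) (f : MvPolynomial σ k) : MvPolynomial σ k :=
  ∑ m ∈ f.support.filter (fun m => m u = f.degreeOf u),
    monomial (m.erase u) (f.coeff m)

/-- The separant of `f`: `∂f/∂u_f`. -/
noncomputable def separant [Nonempty σ] (f : MvPolynomial σ k) : MvPolynomial σ k :=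
  pderiv (leader rle f) f

/-- `H_A`: the product of the initials and separants of the elements of `A`. -/
noncomputable def Hset [Nonempty σ] (A : Finset (MvPolynomial σ k)) : MvPolynomial σ k :=
  ∏ f ∈ A, initial (leader rle f) f * separant rle f

/-- The rank of a polynomial: its leader together with its degree in the leader. -/
noncomputable def rankOf [Nonempty σ] (f : MvPolynomial σ k) : σ × ℕ :=
  (leader rle f, f.degreeOf (leader rle f))

/-- Comparison of ranks: lower leader, or same leader and lower degree. -/
def rkLt (a b : σ × ℕ) : Prop := rlt rle a.1 b.1 ∨ (a.1 = b.1 ∧ a.2 < b.2)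

/-- Ritt–Kolchin comparison of rank sequences listed in increasing rank;
a longer sequence with equal common prefix is lower, and the empty set is highest. -/
def seqLt : List (σ × ℕ) → List (σ × ℕ) → Prop
  | [], _ => False
  | _ :: _, [] => True
  | a :: as, b :: bs => rkLt rle a b ∨ (a = b ∧ seqLt as bs)

def seqLe (A B : List (σ × ℕ)) : Prop := seqLt rle A B ∨ A = B

/-- `A` is of lower or equal rank than `B` in the Ritt–Kolchin sense. -/
def setRankLe [Nonempty σ] (A B : Finset (MvPolynomial σ k)) : Prop :=
  ∃ LA LB : List (MvPolynomial σ k),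
    LA.Nodup ∧ LB.Nodup ∧ (∀ f, f ∈ LA ↔ f ∈ A) ∧ (∀ f, f ∈ LB ↔ f ∈ B) ∧
    (LA.map (rankOf rle)).Chain' (rkLt rle) ∧ (LB.map (rankOf rle)).Chain' (rkLt rle) ∧
    seqLe rle (LA.map (rankOf rle)) (LB.map (rankOf rle))

/-- `f` is partially reduced w.r.t. `g`: no proper derivative of the leader of `g`
occurs in `f`. -/
def PartiallyReducedWrt [Nonempty σ] (f g : MvPolynomial σ k) : Prop :=
  ∀ v ∈ f.vars, ¬ pd v (leader rle g)

/-- `f` is reduced w.r.t. `g`. -/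
def ReducedWrt [Nonempty σ] (f g : MvPolynomial σ k) : Prop :=
  PartiallyReducedWrt rle pd f g ∧ f.degreeOf (leader rle g) < g.degreeOf (leader rle g)

/-- `A` is a (differentially) autoreduced set. -/
def Autoreduced [Nonempty σ] (A : Finset (MvPolynomial σ k)) : Prop :=
  (∀ f ∈ A, f.vars.Nonempty) ∧ ∀ f ∈ A, ∀ g ∈ A, f ≠ g → ReducedWrt rle pd f g

/-- `A` is a characteristic set (in Kolchin's sense) of the set `I`:
an autoreduced subset of `I` of lowest rank. -/
def IsCharSet [Nonempty σ] (I : Set (MvPolynomial σ k)) (A : Finset (MvPolynomial σ k)) : Prop :=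
  Autoreduced rle pd A ∧ ↑A ⊆ I ∧
    ∀ B : Finset (MvPolynomial σ k), Autoreduced rle pd B → ↑B ⊆ I → setRankLe rle A B

/-- `A` is an algebraically autoreduced set (only the degree condition). -/
def AlgAutoreduced [Nonempty σ] (A : Finset (MvPolynomial σ k)) : Prop :=
  (∀ f ∈ A, f.vars.Nonempty) ∧
    ∀ f ∈ A, ∀ g ∈ A, f ≠ g → f.degreeOf (leader rle g) < g.degreeOf (leader rle g)

/-- `A` is an algebraic characteristic set of the set `I`. -/
def IsAlgCharSet [Nonempty σ] (I : Set (MvPolynomial σ k)) (A : Finset (MvPolynomial σ k)) :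
    Prop :=
  AlgAutoreduced rle A ∧ ↑A ⊆ I ∧
    ∀ B : Finset (MvPolynomial σ k), AlgAutoreduced rle B → ↑B ⊆ I → setRankLe rle A B

end CharSets

/-! ### The ordinary differential polynomial ring `k{y_1,…,y_l}` -/

section Ordinary

variable {k : Type*} [CommRing k] {l : ℕ}

/-- The ordinary differential polynomial ring in `l` differential indeterminates:
the variable `(i, n)` represents `y_i^{(n)}`. -/
abbrev DP (k : Type*) [CommRing k] (l : ℕ) := MvPolynomial (Fin l × ℕ) k

/-- `δ` is a derivation of `k`. -/
structure IsFieldDeriv (δ : k → k) : Prop where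
  map_add : ∀ a b, δ (a + b) = δ a + δ b
  leibniz : ∀ a b, δ (a * b) = a * δ b + b * δ a

/-- `D` is the derivation of `k{y_1,…,y_l}` extending `δ` with `D y_i^{(n)} = y_i^{(n+1)}`. -/
structure IsDeriv (δ : k → k) (D : DP k l → DP k l) : Prop where
  map_add : ∀ f g, D (f + g) = D f + D g
  leibniz : ∀ f g, D (f * g) = f * D g + g * D f
  map_C : ∀ a : k, D (C a) = C (δ a)
  map_X : ∀ u : Fin l × ℕ, D (X u) = X (u.1, u.2 + 1)

/-- A ranking on the derivatives `y_i^{(n)}`. -/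
structure Ranking (l : ℕ) where
  le : Fin l × ℕ → Fin l × ℕ → Prop
  le_refl : ∀ u, le u u
  le_antisymm : ∀ u v, le u v → le v u → u = v
  le_trans : ∀ u v w, le u v → le v w → le u w
  le_total : ∀ u v, le u v ∨ le v u
  le_deriv : ∀ u : Fin l × ℕ, le u (u.1, u.2 + 1)
  deriv_mono : ∀ u v : Fin l × ℕ, le u v → le (u.1, u.2 + 1) (v.1, v.2 + 1)

/-- `v` is a proper derivative of `u` (ordinary case). -/
def properDeriv (v u : Fin l × ℕ) : Prop := v.1 = u.1 ∧ u.2 < v.2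

/-- An orderly ranking: derivatives of strictly larger order are ranked strictly higher. -/
def Ranking.Orderly (r : Ranking l) : Prop :=
  ∀ u v : Fin l × ℕ, u.2 < v.2 → rlt r.le u v

/-- The order of an ordinary differential polynomial. -/
noncomputable def ordOf (f : DP k l) : ℕ := f.vars.sup fun v => v.2

/-- The order of a finite set of differential polynomials: the sum of the orders. -/
noncomputable def ordSet (A : Finset (DP k l)) : ℕ := ∑ f ∈ A, ordOf f

/-- The elements of `A` together with their derivatives whose leader is ranked
strictly below `v`. -/
def lowerDerivs [Nonempty (Fin l)] (r : Ranking l) (D : DP k l → DP k l)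
    (A : Finset (DP k l)) (v : Fin l × ℕ) : Set (DP k l) :=
  {p | ∃ g ∈ A, ∃ q : ℕ, p = D^[q] g ∧
    rlt r.le ((leader r.le g).1, (leader r.le g).2 + q) v}

/-- `A` is coherent (ordinary case). -/
def Coherent [Nonempty (Fin l)] (r : Ranking l) (D : DP k l → DP k l)
    (A : Finset (DP k l)) : Prop :=
  ∀ f ∈ A, ∀ g ∈ A, ∀ v : Fin l × ℕ,
    v.1 = (leader r.le f).1 → v.1 = (leader r.le g).1 →
    (leader r.le f).2 ≤ v.2 → (leader r.le g).2 ≤ v.2 →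
    separant r.le g * D^[v.2 - (leader r.le f).2] f
      - separant r.le f * D^[v.2 - (leader r.le g).2] g
      ∈ sat (Ideal.span (lowerDerivs r D A v)) {Hset r.le A}

end Ordinary

/-! ### The partial differential polynomial ring `k{y_1,…,y_l}`, derivations `δ_1,…,δ_n` -/

section Partial

variable {k : Type*} [CommRing k] {l n : ℕ}

/-- The partial differential polynomial ring: the variable `(i, e)` represents
`δ_1^{e 1} ⋯ δ_n^{e n} y_i`. -/
abbrev PDP (k : Type*) [CommRing k] (l n : ℕ) := MvPolynomial (Fin l × (Fin n → ℕ)) k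

/-- `D j` are the commuting derivations of `k{y_1,…,y_l}` extending the `δ j`. -/
structure IsPDeriv (δ : Fin n → k → k) (D : Fin n → PDP k l n → PDP k l n) : Prop where
  coeff_add : ∀ j a b, δ j (a + b) = δ j a + δ j b
  coeff_leibniz : ∀ j a b, δ j (a * b) = a * δ j b + b * δ j a
  map_add : ∀ j f g, D j (f + g) = D j f + D j g
  leibniz : ∀ j f g, D j (f * g) = f * D j g + g * D j f
  map_C : ∀ j (a : k), D j (C a) = C (δ j a)
  map_X : ∀ j (u : Fin l × (Fin n → ℕ)), D j (X u) = X (u.1, u.2 + Pi.single j 1)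
  comm : ∀ j j' f, D j (D j' f) = D j' (D j f)

/-- Apply the derivative operator `θ = δ_1^{θ 1} ⋯ δ_n^{θ n}`. -/
def applyTheta {R : Type*} (D : Fin n → R → R) (θ : Fin n → ℕ) (f : R) : R :=
  (List.finRange n).foldr (fun j g => (D j)^[θ j] g) f

/-- The order of a derivative. -/
def ordv (u : Fin l × (Fin n → ℕ)) : ℕ := ∑ j, u.2 j

/-- A ranking on the derivatives `θ y_i` (partial case). -/
structure PRanking (l n : ℕ) where
  le : (Fin l × (Fin n → ℕ)) → (Fin l × (Fin n → ℕ)) → Prop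
  le_refl : ∀ u, le u u
  le_antisymm : ∀ u v, le u v → le v u → u = v
  le_trans : ∀ u v w, le u v → le v w → le u w
  le_total : ∀ u v, le u v ∨ le v u
  le_deriv : ∀ u (j : Fin n), le u (u.1, u.2 + Pi.single j 1)
  deriv_mono : ∀ u v (j : Fin n), le u v → le (u.1, u.2 + Pi.single j 1) (v.1, v.2 + Pi.single j 1)

/-- An orderly ranking (partial case). -/
def PRanking.Orderly (r : PRanking l n) : Prop :=
  ∀ u v, ordv u < ordv v → rlt r.le u v

/-- `v` is a proper derivative of `u` (partial case). -/
def pProperDeriv (v u : Fin l × (Fin n → ℕ)) : Prop :=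
  v.1 = u.1 ∧ (∀ j, u.2 j ≤ v.2 j) ∧ u.2 ≠ v.2

/-- Elements of `A` and their derivatives whose leader is ranked strictly below `v`. -/
def plowerDerivs [Nonempty (Fin l)] (r : PRanking l n) (D : Fin n → PDP k l n → PDP k l n)
    (A : Finset (PDP k l n)) (v : Fin l × (Fin n → ℕ)) : Set (PDP k l n) :=
  {p | ∃ g ∈ A, ∃ θ : Fin n → ℕ, p = applyTheta D θ g ∧
    rlt r.le ((leader r.le g).1, (leader r.le g).2 + θ) v}

/-- `A` is coherent (partial case). -/
def PCoherent [Nonempty (Fin l)] (r : PRanking l n) (D : Fin n → PDP k l n → PDP k l n)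
    (A : Finset (PDP k l n)) : Prop :=
  ∀ f ∈ A, ∀ g ∈ A, ∀ v : Fin l × (Fin n → ℕ),
    v.1 = (leader r.le f).1 → v.1 = (leader r.le g).1 →
    (∀ j, (leader r.le f).2 j ≤ v.2 j) → (∀ j, (leader r.le g).2 j ≤ v.2 j) →
    separant r.le g * applyTheta D (v.2 - (leader r.le f).2) f
      - separant r.le f * applyTheta D (v.2 - (leader r.le g).2) g
      ∈ sat (Ideal.span (plowerDerivs r D A v)) {Hset r.le A}

end Partial

/-! ### Auxiliary lemmas -/

set_option linter.unusedSectionVars false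

section Aux

variable {k : Type*} [Field k] [CharZero k] {l : ℕ} [Nonempty (Fin l)]

/-- Any nonempty finset has a maximum w.r.t. the ranking. -/
theorem finset_exists_max (r : Ranking l) (s : Finset (Fin l × ℕ)) (hs : s.Nonempty) :
    ∃ u ∈ s, ∀ w ∈ s, r.le w u := by
  classical
  induction s using Finset.induction with
  | empty => exact absurd hs (by simp)
  | @insert a s ha ih =>
    rcases s.eq_empty_or_nonempty with rfl | hs'
    · exact ⟨a, by simp, by simpa using r.le_refl a⟩
    · obtain ⟨u, hu, hmax⟩ := ih hs'
      rcases r.le_total a u with h | h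
      · exact ⟨u, Finset.mem_insert_of_mem hu, by
          intro w hw
          rcases Finset.mem_insert.mp hw with rfl | hw
          · exact h
          · exact hmax w hw⟩
      · exact ⟨a, Finset.mem_insert_self a _, by
          intro w hw
          rcases Finset.mem_insert.mp hw with rfl | hw
          · exact r.le_refl _
          · exact r.le_trans _ _ _ (hmax w hw) h⟩

theorem ord_le_of_rle {r : Ranking l} (hr : r.Orderly) {w u : Fin l × ℕ}
    (h : r.le w u) : w.2 ≤ u.2 := by
  by_contra hc
  push_neg at hc
  obtain ⟨h1, h2⟩ := hr u w hc
  exact h2 (r.le_antisymm _ _ h1 h)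

theorem rle_of_ord_lt {r : Ranking l} (hr : r.Orderly) {w u : Fin l × ℕ}
    (h : w.2 < u.2) : r.le w u := (hr w u h).1

theorem deriv_mono_iter (r : Ranking l) {w u : Fin l × ℕ} (h : r.le w u) (q : ℕ) :
    r.le (w.1, w.2 + q) (u.1, u.2 + q) := by
  induction q with
  | zero => exact h
  | succ n ih =>
    have := r.deriv_mono _ _ ih
    simpa [Nat.add_assoc] using this

/-- Measure on derivatives: strictly monotone for an orderly ranking. -/
noncomputable def phiM (r : Ranking l) (v : Fin l × ℕ) : ℕ :=
  (l + 1) * v.2 + {i : Fin l | r.le (i, v.2) v}.ncard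

theorem phiM_strict_mono {r : Ranking l} (hr : r.Orderly) {v w : Fin l × ℕ}
    (h : rlt r.le v w) : phiM r v < phiM r w := by
  classical
  have hfin : ∀ (s : Set (Fin l)), s.Finite := fun s => s.toFinite
  have hcard : ∀ (s : Set (Fin l)), s.ncard ≤ l := by
    intro s
    have := Set.ncard_le_ncard (Set.subset_univ s) (hfin _)
    simpa [Set.ncard_univ] using this
  rcases Nat.lt_or_ge v.2 w.2 with hlt | hge
  · have h1 : {i : Fin l | r.le (i, v.2) v}.ncard ≤ l := hcard _
    have : (l+1) * v.2 + l < (l+1) * w.2 := by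
      calc (l+1) * v.2 + l < (l+1) * v.2 + (l+1) := by omega
        _ = (l+1) * (v.2+1) := by ring
        _ ≤ (l+1) * w.2 := Nat.mul_le_mul_left _ (by omega)
    unfold phiM; omega
  · have hord : w.2 ≤ v.2 := hge
    have hvw : v.2 = w.2 := by
      rcases Nat.lt_or_ge v.2 w.2 with h' | h'
      · omega
      · -- if w.2 < v.2 then w < v, contradicting v < w
        rcases Nat.eq_or_lt_of_le h' with h'' | h''
        · omega
        · exact absurd ((hr w v h'').1) (fun hle => h.2 (r.le_antisymm _ _ h.1 hle))
    have hsub : {i : Fin l | r.le (i, v.2) v} ⊂ {i : Fin l | r.le (i, w.2) w} := by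
      constructor
      · intro i hi
        simp only [Set.mem_setOf_eq] at hi ⊢
        rw [← hvw]
        exact r.le_trans _ _ _ hi h.1
      · intro hcon
        have : w.1 ∈ {i : Fin l | r.le (i, w.2) w} := by
          simp only [Set.mem_setOf_eq]
          exact r.le_refl (w.1, w.2)
        have hw1 := hcon this
        simp only [Set.mem_setOf_eq] at hw1
        rw [hvw] at hw1
        exact h.2 (r.le_antisymm _ _ h.1 hw1)
    have := Set.ncard_lt_ncard hsub (hfin _)
    have he : (l+1) * v.2 = (l+1) * w.2 := by rw [hvw]
    unfold phiM
    omega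

end Aux

section DLemmas

variable {k : Type*} [Field k] [CharZero k] {l : ℕ}
variable {δ : k → k} {D : DP k l → DP k l}

/-- shift of a derivative -/
abbrev shv (w : Fin l × ℕ) : Fin l × ℕ := (w.1, w.2 + 1)

theorem D_zero (hD : IsDeriv δ D) : D 0 = 0 := by
  have := hD.map_add 0 0
  simpa using this

theorem D_one (hD : IsDeriv δ D) : D 1 = 0 := by
  have h := hD.leibniz 1 1
  simp only [one_mul, mul_one] at h
  have h2 : D 1 = D 1 + D 1 := by simpa using h
  exact left_eq_add.mp h2

theorem D_neg (hD : IsDeriv δ D) (f : DP k l) : D (-f) = -D f := by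
  have := hD.map_add f (-f)
  simp only [add_neg_cancel, D_zero hD] at this
  linear_combination -this

theorem D_sub (hD : IsDeriv δ D) (f g : DP k l) : D (f - g) = D f - D g := by
  rw [sub_eq_add_neg, hD.map_add, D_neg hD, sub_eq_add_neg]

theorem D_sum (hD : IsDeriv δ D) {ι : Type*} (s : Finset ι) (g : ι → DP k l) :
    D (∑ i ∈ s, g i) = ∑ i ∈ s, D (g i) := by
  classical
  induction s using Finset.induction with
  | empty => simpa using D_zero hD
  | @insert a s ha ih =>
    rw [Finset.sum_insert ha, Finset.sum_insert ha, hD.map_add, ih]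

theorem vars_D_X_pow (hD : IsDeriv δ D) (i : Fin l × ℕ) (e : ℕ) :
    (D ((X i : DP k l) ^ e)).vars ⊆ {i, shv i} := by
  classical
  induction e with
  | zero => simp [D_one hD]
  | succ n ih =>
    have : (X i : DP k l) ^ (n+1) = X i ^ n * X i := by ring
    rw [this, hD.leibniz, hD.map_X]
    refine (vars_add_subset _ _).trans ?_
    refine Finset.union_subset ?_ ?_
    · refine (vars_mul _ _).trans ?_
      refine Finset.union_subset ((vars_pow _ _).trans ?_) ?_
      · intro w hw
        rw [vars_X] at hw
        simp at hw
        simp [hw]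
      · intro w hw
        rw [vars_X] at hw
        simp at hw
        simp [hw, shv]
    · refine (vars_mul _ _).trans ?_
      refine Finset.union_subset ?_ (ih.trans ?_)
      · intro w hw
        rw [vars_X] at hw
        simp at hw
        simp [hw]
      · exact Finset.Subset.refl _

theorem vars_D_monomial (hD : IsDeriv δ D) (m : (Fin l × ℕ) →₀ ℕ) (a : k) :
    (D (monomial m a)).vars ⊆ m.support ∪ m.support.image shv := by
  classical
  -- monomial m a = C a * ∏ X i ^ m i
  rw [monomial_eq]
  have key : ∀ s : Finset (Fin l × ℕ), ∀ e : (Fin l × ℕ) → ℕ,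
      (D (∏ i ∈ s, (X i : DP k l) ^ e i)).vars ⊆ s ∪ s.image shv := by
    intro s
    induction s using Finset.induction with
    | empty =>
      intro e
      simpa using (by simp [D_one hD] : (D (1 : DP k l)).vars ⊆ ∅)
    | @insert b s hb ih =>
      intro e
      rw [Finset.prod_insert hb, hD.leibniz]
      refine (vars_add_subset _ _).trans ?_
      refine Finset.union_subset ?_ ?_
      · refine (vars_mul _ _).trans (Finset.union_subset ?_ ?_)
        · refine ((vars_pow _ _).trans ?_)
          intro w hw
          rw [vars_X] at hw
          simp at hw
          simp [hw]
        · refine (ih e).trans ?_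
          intro w hw
          simp only [Finset.mem_union, Finset.mem_image, Finset.mem_insert] at hw ⊢
          rcases hw with hw | ⟨x, hx, rfl⟩
          · exact Or.inl (Or.inr hw)
          · exact Or.inr ⟨x, Or.inr hx, rfl⟩
      · refine (vars_mul _ _).trans (Finset.union_subset ?_ ?_)
        · refine (vars_prod _).trans ?_
          intro w hw
          simp only [Finset.mem_biUnion] at hw
          obtain ⟨x, hx, hw⟩ := hw
          have := (vars_pow _ _) hw
          rw [vars_X] at this
          simp only [Finset.mem_singleton] at this
          subst this
          simp only [Finset.mem_union, Finset.mem_insert]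
          exact Or.inl (Or.inr hx)
        · refine (vars_D_X_pow hD _ _).trans ?_
          intro w hw
          simp only [Finset.mem_insert, Finset.mem_singleton] at hw
          simp only [Finset.mem_union, Finset.mem_insert, Finset.mem_image]
          rcases hw with rfl | rfl
          · exact Or.inl (Or.inl rfl)
          · exact Or.inr ⟨b, Or.inl rfl, rfl⟩
  rw [Finsupp.prod]
  rw [hD.leibniz]
  refine (vars_add_subset _ _).trans (Finset.union_subset ?_ ?_)
  · refine (vars_mul _ _).trans (Finset.union_subset ?_ ?_)
    · rw [vars_C]; exact Finset.empty_subset _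
    · exact (key _ _)
  · refine (vars_mul _ _).trans (Finset.union_subset ?_ ?_)
    · refine (vars_prod _).trans ?_
      intro w hw
      simp only [Finset.mem_biUnion] at hw
      obtain ⟨x, hx, hw⟩ := hw
      have := (vars_pow _ _) hw
      rw [vars_X] at this
      simp only [Finset.mem_singleton] at this
      subst this
      exact Finset.mem_union_left _ hx
    · rw [hD.map_C, vars_C]; exact Finset.empty_subset _

theorem vars_D_subset (hD : IsDeriv δ D) (f : DP k l) :
    (D f).vars ⊆ f.vars ∪ f.vars.image shv := by
  classical
  conv_lhs => rw [f.as_sum]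
  rw [D_sum hD]
  refine (vars_sum_subset _ _).trans ?_
  intro w hw
  simp only [Finset.mem_biUnion] at hw
  obtain ⟨m, hm, hw⟩ := hw
  have hsub : m.support ⊆ f.vars := by
    intro i hi
    exact (mem_vars i).mpr ⟨m, hm, hi⟩
  have := vars_D_monomial hD m (coeff m f) hw
  simp only [Finset.mem_union, Finset.mem_image] at this ⊢
  rcases this with h | ⟨x, hx, rfl⟩
  · exact Or.inl (hsub h)
  · exact Or.inr ⟨x, hsub hx, rfl⟩

end DLemmas

section PDLemmas

variable {k : Type*} [Field k] [CharZero k] {l : ℕ}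
variable {δ : k → k} {D : DP k l → DP k l}

theorem vars_pderiv (u : Fin l × ℕ) (f : DP k l) :
    (pderiv u f).vars ⊆ f.vars := by
  classical
  conv_lhs => rw [f.as_sum]
  rw [map_sum]
  refine (vars_sum_subset _ _).trans ?_
  intro w hw
  simp only [Finset.mem_biUnion] at hw
  obtain ⟨m, hm, hw⟩ := hw
  rw [pderiv_monomial] at hw
  have hd := (mem_vars w).mp hw
  obtain ⟨d, hd1, hd2⟩ := hd
  have := support_monomial_subset hd1
  simp only [Finset.mem_singleton] at this
  subst this
  have : w ∈ m.support := Finsupp.support_tsub hd2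
  exact (mem_vars w).mpr ⟨m, hm, this⟩

theorem pderiv_ne_zero_of_mem_vars {u : Fin l × ℕ} {f : DP k l}
    (h : u ∈ f.vars) : pderiv u f ≠ 0 := by
  classical
  -- pick m in the support realizing the maximal exponent of u
  have hsupp : f.support.Nonempty := by
    rcases (mem_vars u).mp h with ⟨m, hm, _⟩
    exact ⟨m, hm⟩
  obtain ⟨m, hm, hmax⟩ := Finset.exists_mem_eq_sup f.support hsupp (fun m => m u)
  have hdeg : 0 < m u := by
    rcases (mem_vars u).mp h with ⟨m', hm', hu'⟩
    have h1 : m' u ≤ f.support.sup fun m => m u := Finset.le_sup (f := fun m => m u) hm'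
    have h2 : 0 < m' u := Nat.pos_of_ne_zero (Finsupp.mem_support_iff.mp hu')
    omega
  -- compute the coefficient of pderiv at m - single u 1
  set t := m - Finsupp.single u 1 with ht
  have hcoeff : coeff t (pderiv u f) = coeff m f * (m u : k) := by
    conv_lhs => rw [f.as_sum, map_sum]
    rw [coeff_sum]
    rw [Finset.sum_eq_single m]
    · rw [pderiv_monomial, coeff_monomial, if_pos rfl]
    · intro m' hm' hne
      rw [pderiv_monomial, coeff_monomial]
      by_cases hz : m' u = 0
      · simp [hz]
      · rw [if_neg]
        intro hcon
        apply hne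
        -- m' - single u 1 = t = m - single u 1, with m' u, m u ≥ 1
        have : m' = m := by
          ext w
          have h1 := DFunLike.congr_fun hcon w
          rw [ht] at h1
          by_cases hw : w = u
          · subst hw
            simp only [Finsupp.tsub_apply, Finsupp.single_eq_same] at h1
            omega
          · simp only [Finsupp.tsub_apply,
              Finsupp.single_eq_of_ne' (Ne.symm hw)] at h1
            omega
        exact this
    · intro hmm
      exact absurd hm hmm
  intro hcon
  rw [hcon] at hcoeff
  simp only [coeff_zero] at hcoeff
  have h1 : coeff m f ≠ 0 := mem_support_iff.mp hm
  have h2 : (m u : k) ≠ 0 := Nat.cast_ne_zero.mpr (by omega)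
  exact (mul_ne_zero h1 h2) hcoeff.symm

theorem pderiv_D_comm (hD : IsDeriv δ D) (i : Fin l) (m : ℕ) (f : DP k l) :
    pderiv (i, m + 1) (D f) = D (pderiv (i, m + 1) f) + pderiv (i, m) f := by
  classical
  induction f using MvPolynomial.induction_on with
  | C a => simp [hD.map_C, D_zero hD]
  | add p q ihp ihq =>
    rw [hD.map_add, map_add, ihp, ihq, map_add, map_add, hD.map_add]
    ring
  | mul_X p w ih =>
    set z : Fin l × ℕ := (i, m + 1) with hz
    set z' : Fin l × ℕ := (i, m) with hz'
    have hzz' : z' ≠ z := by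
      intro hc
      have := congrArg Prod.snd hc
      simp [hz, hz'] at this
    rw [hD.leibniz, hD.map_X]
    by_cases hw : w = z
    · subst hw
      have hsh : (z.1, z.2 + 1) ≠ z := by
        intro hc
        have := congrArg Prod.snd hc
        simp at this
      have e1 : pderiv z (p * X z) = pderiv z p * X z + p := by
        rw [pderiv_mul, pderiv_X_self, mul_one]
      have e2 : pderiv z' (p * X z) = pderiv z' p * X z := by
        rw [pderiv_mul, pderiv_X_of_ne (Ne.symm hzz'), mul_zero, add_zero]
      have e3 : D (pderiv z p * X z) = pderiv z p * X (z.1, z.2 + 1) + X z * D (pderiv z p) := by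
        rw [hD.leibniz, hD.map_X]
      rw [map_add, pderiv_mul, pderiv_mul, ih, e1, e2, hD.map_add, e3,
        pderiv_X_self, pderiv_X_of_ne hsh]
      ring
    · by_cases hw' : w = z'
      · subst hw'
        have h1 : (z'.1, z'.2 + 1) = z := by
          rw [hz', hz]
        have e1 : pderiv z (p * X z') = pderiv z p * X z' := by
          rw [pderiv_mul, pderiv_X_of_ne hzz', mul_zero, add_zero]
        have e2 : pderiv z' (p * X z') = pderiv z' p * X z' + p := by
          rw [pderiv_mul, pderiv_X_self, mul_one]
        have e3 : D (pderiv z p * X z') = pderiv z p * X (z'.1, z'.2 + 1) + X z' * D (pderiv z p) := by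
          rw [hD.leibniz, hD.map_X]
        rw [h1, map_add, pderiv_mul, pderiv_mul, ih, pderiv_X_self,
          pderiv_X_of_ne hzz', e1, e2, e3, h1]
        ring
      · have h1 : (w.1, w.2 + 1) ≠ z := by
          intro hc
          apply hw'
          have h2 : w.1 = i := congrArg Prod.fst hc
          have h3 : w.2 + 1 = m + 1 := congrArg Prod.snd hc
          rw [hz']
          exact Prod.ext h2 (by omega)
        have e1 : pderiv z (p * X w) = pderiv z p * X w := by
          rw [pderiv_mul, pderiv_X_of_ne hw, mul_zero, add_zero]
        have e2 : pderiv z' (p * X w) = pderiv z' p * X w := by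
          rw [pderiv_mul, pderiv_X_of_ne hw', mul_zero, add_zero]
        have e3 : D (pderiv z p * X w) = pderiv z p * X (w.1, w.2 + 1) + X w * D (pderiv z p) := by
          rw [hD.leibniz, hD.map_X]
        rw [map_add, pderiv_mul, pderiv_mul, ih, pderiv_X_of_ne h1,
          pderiv_X_of_ne hw, e1, e2, e3]
        ring

theorem vars_D_iter (hD : IsDeriv δ D) (q : ℕ) (f : DP k l) :
    ∀ w ∈ (D^[q] f).vars, ∃ w0 ∈ f.vars, ∃ q' ≤ q, w = (w0.1, w0.2 + q') := by
  induction q generalizing f with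
  | zero =>
    intro w hw
    exact ⟨w, by simpa using hw, 0, le_refl _, by simp⟩
  | succ n ih =>
    intro w hw
    rw [Function.iterate_succ_apply] at hw
    obtain ⟨w0, hw0, q', hq', rfl⟩ := ih (D f) w hw
    have := vars_D_subset hD f hw0
    simp only [Finset.mem_union, Finset.mem_image] at this
    rcases this with h | ⟨x, hx, rfl⟩
    · exact ⟨w0, h, q', by omega, rfl⟩
    · exact ⟨x, hx, q' + 1, by omega, by simp [shv]; omega⟩

end PDLemmas

section LeaderLemmas

variable {k : Type*} [Field k] [CharZero k] {l : ℕ} [Nonempty (Fin l)]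

theorem isLeader_leader (r : Ranking l) (f : DP k l) (h : f.vars.Nonempty) :
    IsLeader r.le f (leader r.le f) := by
  have : ∃ u, IsLeader r.le f u := by
    obtain ⟨u, hu, hmax⟩ := finset_exists_max r f.vars h
    exact ⟨u, hu, hmax⟩
  exact Classical.epsilon_spec this

theorem leader_mem_vars (r : Ranking l) {f : DP k l} (h : f.vars.Nonempty) :
    leader r.le f ∈ f.vars := (isLeader_leader r f h).1

theorem le_leader (r : Ranking l) {f : DP k l} (h : f.vars.Nonempty)
    {w : Fin l × ℕ} (hw : w ∈ f.vars) : r.le w (leader r.le f) :=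
  (isLeader_leader r f h).2 w hw

theorem separant_ne_zero (r : Ranking l) {f : DP k l} (h : f.vars.Nonempty) :
    separant r.le f ≠ 0 :=
  pderiv_ne_zero_of_mem_vars (leader_mem_vars r h)

theorem vars_separant (r : Ranking l) (f : DP k l) :
    (separant r.le f).vars ⊆ f.vars := vars_pderiv _ _

end LeaderLemmas

section ShapeLemmas

variable {k : Type*} [Field k] [CharZero k] {l : ℕ} [Nonempty (Fin l)]
variable {δ : k → k} {D : DP k l → DP k l} {r : Ranking l}

theorem vars_Dq_rle (hD : IsDeriv δ D) (hr : r.Orderly) {c : DP k l}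
    (hc : c.vars.Nonempty) (q : ℕ) {w : Fin l × ℕ} (hw : w ∈ (D^[q] c).vars) :
    r.le w ((leader r.le c).1, (leader r.le c).2 + q) := by
  obtain ⟨w0, hw0, q', hq', rfl⟩ := vars_D_iter hD q c w hw
  have hle : r.le w0 (leader r.le c) := le_leader r hc hw0
  rcases Nat.eq_or_lt_of_le hq' with rfl | hlt
  · exact deriv_mono_iter r hle q'
  · have : w0.2 + q' < (leader r.le c).2 + q := by
      have := ord_le_of_rle hr hle
      omega
    exact (hr _ _ this).1

theorem vars_Dq_ord (hD : IsDeriv δ D) (hr : r.Orderly) {c : DP k l}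
    (hc : c.vars.Nonempty) (q : ℕ) {w : Fin l × ℕ} (hw : w ∈ (D^[q] c).vars) :
    w.2 ≤ (leader r.le c).2 + q :=
  ord_le_of_rle hr (vars_Dq_rle hD hr hc q hw)

theorem Dq_shape (hD : IsDeriv δ D) (hr : r.Orderly) {c : DP k l}
    (hc : c.vars.Nonempty) (q : ℕ) (hq : 1 ≤ q) :
    ∃ T : DP k l,
      D^[q] c = separant r.le c * X ((leader r.le c).1, (leader r.le c).2 + q) + T ∧
      ∀ w ∈ T.vars, rlt r.le w ((leader r.le c).1, (leader r.le c).2 + q) := by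
  set u := leader r.le c with hu
  set S := separant r.le c with hS
  have hvc : ∀ w ∈ c.vars, r.le w u := fun w hw => le_leader r hc hw
  have hvS : (S : DP k l).vars ⊆ c.vars := vars_separant r c
  induction q with
  | zero => omega
  | succ n ih =>
    rcases Nat.eq_or_lt_of_le hq with h1 | h1
    · -- base case q = 1
      have hn : n = 0 := by omega
      subst hn
      set v : Fin l × ℕ := (u.1, u.2 + 1) with hv
      have hvnc : v ∉ c.vars := by
        intro hcon
        have := ord_le_of_rle hr (hvc v hcon)
        simp [hv] at this
      have hpd : pderiv v (D c) = S := by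
        have := pderiv_D_comm hD u.1 u.2 c
        rw [pderiv_eq_zero_of_notMem_vars hvnc, D_zero hD, zero_add] at this
        rw [show ((u.1, u.2) : Fin l × ℕ) = u from rfl] at this
        exact this
      refine ⟨D c - S * X v, ?_, ?_⟩
      · simp
      · intro w hw
        have hsub : (D c - S * X v).vars ⊆ (D c).vars ∪ (S * X v).vars := by
          rw [sub_eq_add_neg]
          refine (vars_add_subset _ _).trans ?_
          rw [vars_neg]
        have hwne : w ≠ v := by
          intro hcon
          have hz : pderiv v (D c - S * X v) = 0 := by
            rw [map_sub, hpd, pderiv_mul, pderiv_X_self,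
              pderiv_eq_zero_of_notMem_vars (fun hx => hvnc (hvS hx))]
            simp
          exact pderiv_ne_zero_of_mem_vars (hcon ▸ hw) hz
        refine ⟨?_, hwne⟩
        rcases Finset.mem_union.mp (hsub hw) with h | h
        · exact vars_Dq_rle hD hr hc 1 (by simpa using h)
        · rcases Finset.mem_union.mp (vars_mul _ _ h) with h2 | h2
          · have := ord_le_of_rle hr (hvc w (hvS h2))
            exact (hr _ _ (by simp [hv] <;> omega)).1
          · rw [vars_X] at h2
            simp only [Finset.mem_singleton] at h2
            subst h2
            exact r.le_refl _
    · -- inductive step: n ≥ 1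
      have hn : 1 ≤ n := by omega
      obtain ⟨T, hT, hTv⟩ := ih hn
      set v : Fin l × ℕ := (u.1, u.2 + n) with hv
      set v' : Fin l × ℕ := (u.1, u.2 + (n + 1)) with hv'
      have hvv' : v' = (v.1, v.2 + 1) := by
        rw [hv, hv']
        congr 1
      refine ⟨X v * D S + D T, ?_, ?_⟩
      · rw [Function.iterate_succ_apply', hT, hD.map_add, hD.leibniz, hD.map_X, hvv']
        ring
      · intro w hw
        have hordv : ∀ w' : Fin l × ℕ, w'.2 < u.2 + (n+1) → rlt r.le w' v' := by
          intro w' hw'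
          exact hr w' v' (by simp [hv'] <;> omega)
        rcases Finset.mem_union.mp (vars_add_subset _ _ hw) with h | h
        · rcases Finset.mem_union.mp (vars_mul _ _ h) with h2 | h2
          · rw [vars_X] at h2
            simp only [Finset.mem_singleton] at h2
            subst h2
            exact hordv _ (by simp [hv] <;> omega)
          · have h3 := vars_D_subset hD S h2
            rcases Finset.mem_union.mp h3 with h4 | h4
            · have := ord_le_of_rle hr (hvc _ (hvS h4))
              exact hordv _ (by omega)
            · simp only [Finset.mem_image] at h4
              obtain ⟨x, hx, rfl⟩ := h4
              have := ord_le_of_rle hr (hvc _ (hvS hx))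
              exact hordv _ (by simp [shv] <;> omega)
        · have h3 := vars_D_subset hD T h
          rcases Finset.mem_union.mp h3 with h4 | h4
          · have := ord_le_of_rle hr (hTv _ h4).1
            exact hordv _ (by simp [hv] at this ⊢ <;> omega)
          · simp only [Finset.mem_image] at h4
            obtain ⟨x, hx, rfl⟩ := h4
            have h5 := hTv _ hx
            have h6 : r.le (x.1, x.2 + 1) (v.1, v.2 + 1) := r.deriv_mono _ _ h5.1
            rw [← hvv'] at h6
            refine ⟨h6, ?_⟩
            intro hcon
            apply h5.2
            rw [hvv'] at hcon
            have e1 := congrArg Prod.fst hcon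
            have e2 := congrArg Prod.snd hcon
            dsimp [shv] at e1 e2
            exact Prod.ext e1 (Nat.add_right_cancel e2)

end ShapeLemmas

section EvalLemmas

variable {k : Type*} [Field k] [CharZero k] {l : ℕ}

/-- Evaluation with values agreeing with `ι ∘ X` on the variables of `f` gives `ι f`. -/
theorem eval₂_eq_of_vars {A : Type*} [CommRing A] (ι : DP k l →+* A)
    (g : Fin l × ℕ → A) (f : DP k l) (hg : ∀ w ∈ f.vars, g w = ι (X w)) :
    eval₂ (ι.comp (C : k →+* DP k l)) g f = ι f := by
  have h1 : eval₂ (ι.comp (C : k →+* DP k l)) g f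
      = eval₂ (ι.comp (C : k →+* DP k l)) (fun w => ι (X w)) f := by
    apply eval₂_congr
    intro i c hc hcoeff
    exact hg i ((mem_vars i).mpr ⟨c, mem_support_iff.mpr hcoeff, hc⟩)
  rw [h1]
  have h2 := eval₂_comp_left ι (C : k →+* DP k l) X f
  rw [eval₂_eta] at h2
  exact h2.symm

theorem vars_initial_subset (r : Ranking l) (u : Fin l × ℕ) (f : DP k l) :
    (initial u f).vars ⊆ f.vars := by
  classical
  unfold initial
  refine (vars_sum_subset _ _).trans ?_
  intro w hw
  simp only [Finset.mem_biUnion] at hw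
  obtain ⟨m, hm, hw⟩ := hw
  simp only [Finset.mem_filter] at hm
  have hd := (mem_vars w).mp hw
  obtain ⟨d, hd1, hd2⟩ := hd
  have := support_monomial_subset hd1
  simp only [Finset.mem_singleton] at this
  subst this
  have : w ∈ m.support := by
    rw [Finsupp.support_erase] at hd2
    exact Finset.erase_subset _ _ hd2
  exact (mem_vars w).mpr ⟨m, hm.1, this⟩

variable [Nonempty (Fin l)]

theorem vars_Hset_subset (r : Ranking l) (C : Finset (DP k l)) :
    (Hset r.le C).vars ⊆ C.biUnion (fun f => f.vars) := by
  classical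
  unfold Hset
  refine (vars_prod _).trans ?_
  intro w hw
  simp only [Finset.mem_biUnion] at hw ⊢
  obtain ⟨f, hf, hw⟩ := hw
  rcases Finset.mem_union.mp (vars_mul _ _ hw) with h | h
  · exact ⟨f, hf, vars_initial_subset r _ f h⟩
  · exact ⟨f, hf, vars_separant r f h⟩

end EvalLemmas

section SpanLemmas

variable {k : Type*} [Field k] [CharZero k] {l : ℕ}
variable {δ : k → k} {D : DP k l → DP k l}

/-- The differential ideal generated by `C` is the span of all derivatives. -/
theorem diffIdeal1_eq_span (hD : IsDeriv δ D) (C : Finset (DP k l)) :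
    diffIdeal1 D ↑C = Ideal.span {p | ∃ c ∈ C, ∃ q : ℕ, p = D^[q] c} := by
  classical
  set S : Set (DP k l) := {p | ∃ c ∈ C, ∃ q : ℕ, p = D^[q] c} with hS
  apply le_antisymm
  · -- diffIdeal ≤ span: show span is a differential ideal containing C
    apply sInf_le
    constructor
    · intro c hc
      exact Ideal.subset_span ⟨c, hc, 0, rfl⟩
    · -- span S is differential
      intro _ f hf
      -- consider the ideal J of elements f of span S with D f ∈ span S
      let J : Ideal (DP k l) :=
        { carrier := {f | f ∈ Ideal.span S ∧ D f ∈ Ideal.span S}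
          add_mem' := by
            intro a b ha hb
            exact ⟨Ideal.add_mem _ ha.1 hb.1, by
              rw [hD.map_add]; exact Ideal.add_mem _ ha.2 hb.2⟩
          zero_mem' := ⟨Ideal.zero_mem _, by rw [D_zero hD]; exact Ideal.zero_mem _⟩
          smul_mem' := by
            intro a f hf
            refine ⟨Ideal.mul_mem_left _ a hf.1, ?_⟩
            rw [smul_eq_mul, hD.leibniz]
            exact Ideal.add_mem _ (Ideal.mul_mem_left _ _ hf.2)
              (Ideal.mul_mem_right _ _ hf.1) }
      have hSJ : S ⊆ J := by
        intro p hp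
        obtain ⟨c, hc, q, rfl⟩ := hp
        refine ⟨Ideal.subset_span ⟨c, hc, q, rfl⟩, ?_⟩
        have : D (D^[q] c) = D^[q+1] c := (Function.iterate_succ_apply' D q c).symm
        rw [this]
        exact Ideal.subset_span ⟨c, hc, q+1, rfl⟩
      have := Ideal.span_le.mpr hSJ
      exact (this hf).2
  · -- span ≤ diffIdeal
    rw [Ideal.span_le]
    rintro p ⟨c, hc, q, rfl⟩
    rw [diffIdeal1, diffIdeal]
    have key : ∀ I : Ideal (DP k l), (∀ c' ∈ C, (c' : DP k l) ∈ I) →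
        IsDiffIdeal (fun _ : Unit => D) I → D^[q] c ∈ I := by
      intro I h1 h2
      induction q with
      | zero => exact h1 c hc
      | succ n ih =>
        rw [Function.iterate_succ_apply']
        exact h2 () _ ih
    exact (Submodule.mem_sInf).mpr fun I hI => key I (fun c' hc' => hI.1 hc') hI.2

end SpanLemmas

section LocLemmas

variable {k : Type*} [Field k] [CharZero k] {l : ℕ}
variable (S0 T0 : DP k l) (v' : Fin l × ℕ)

/-- The canonical map into the localization away from `S0`. -/
noncomputable abbrev locMap : DP k l →+* Localization.Away S0 :=
  algebraMap (DP k l) (Localization.Away S0)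

theorem locMap_injective (hS0 : S0 ≠ 0) : Function.Injective (locMap S0) :=
  IsLocalization.injective _ (powers_le_nonZeroDivisors_of_noZeroDivisors hS0)

theorem exists_common_denom {α : Type*} (s : Finset α)
    (z : α → Localization.Away S0) :
    ∃ n : ℕ, ∀ a ∈ s, ∃ b, locMap S0 (S0 ^ n) * z a = locMap S0 b := by
  classical
  induction s using Finset.induction with
  | empty => exact ⟨0, by simp⟩
  | @insert a s ha ih =>
    obtain ⟨n1, hn1⟩ := ih
    obtain ⟨⟨b, m⟩, hm⟩ := IsLocalization.surj (M := Submonoid.powers S0) (z a)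
    obtain ⟨n2, hn2⟩ := m.2
    refine ⟨n1 + n2, ?_⟩
    intro a' ha'
    have hmm : (m : DP k l) = S0 ^ n2 := hn2.symm
    rw [hmm] at hm
    rcases Finset.mem_insert.mp ha' with rfl | ha'
    · refine ⟨S0 ^ n1 * b, ?_⟩
      rw [pow_add, map_mul, map_mul]
      calc locMap S0 (S0 ^ n1) * locMap S0 (S0 ^ n2) * z a'
          = locMap S0 (S0 ^ n1) * (z a' * locMap S0 (S0 ^ n2)) := by ring
        _ = locMap S0 (S0 ^ n1) * locMap S0 b := by rw [hm]
    · obtain ⟨b', hb'⟩ := hn1 a' ha'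
      refine ⟨S0 ^ n2 * b', ?_⟩
      rw [pow_add, map_mul, map_mul]
      calc locMap S0 (S0 ^ n1) * locMap S0 (S0 ^ n2) * z a'
          = locMap S0 (S0 ^ n2) * (locMap S0 (S0 ^ n1) * z a') := by ring
        _ = locMap S0 (S0 ^ n2) * locMap S0 b' := by rw [hb']

/-- The substitution `X v' ↦ -T0 / S0` (and identity elsewhere). -/
noncomputable def chiHom : DP k l →+* Localization.Away S0 :=
  eval₂Hom ((locMap S0).comp (C : k →+* DP k l))
    (fun w => if w = v' then -(locMap S0 T0) * IsLocalization.Away.invSelf S0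
      else locMap S0 (X w))

theorem chiHom_eq_of_not_mem {f : DP k l} (hf : v' ∉ f.vars) :
    chiHom S0 T0 v' f = locMap S0 f := by
  classical
  unfold chiHom
  rw [coe_eval₂Hom]
  apply eval₂_eq_of_vars
  intro w hw
  rw [if_neg]
  intro hcon
  subst hcon
  exact hf hw

theorem chiHom_shape {Sj Tj : DP k l} (hSj : v' ∉ Sj.vars) (hTj : v' ∉ Tj.vars) :
    locMap S0 S0 * chiHom S0 T0 v' (Sj * X v' + Tj)
      = locMap S0 (S0 * Tj - Sj * T0) := by
  classical
  have hX : chiHom S0 T0 v' (X v') = -(locMap S0 T0) * IsLocalization.Away.invSelf S0 := by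
    unfold chiHom
    rw [coe_eval₂Hom, eval₂_X, if_pos rfl]
  have hinv : locMap S0 S0 * IsLocalization.Away.invSelf S0 = 1 :=
    IsLocalization.Away.mul_invSelf S0
  rw [map_add, map_mul, hX, chiHom_eq_of_not_mem S0 T0 v' hSj,
    chiHom_eq_of_not_mem S0 T0 v' hTj, map_sub, map_mul, map_mul]
  linear_combination (-(locMap S0 Sj * locMap S0 T0)) * hinv

end LocLemmas

section KeyLemma

variable {k : Type*} [Field k] [CharZero k] {l : ℕ} [Nonempty (Fin l)]
variable {δ : k → k} {D : DP k l → DP k l} {r : Ranking l}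

/-- Derivatives of elements of `C` whose derived leader has order at most `h`. -/
def goodGens (r : Ranking l) (D : DP k l → DP k l) (C : Finset (DP k l)) (h : ℕ) :
    Set (DP k l) :=
  {p | ∃ c ∈ C, ∃ q : ℕ, p = D^[q] c ∧ (leader r.le c).2 + q ≤ h}

/-- Derivatives of elements of `C` that are either good or whose derived leader is ranked
strictly below `v`. -/
def belowGens (r : Ranking l) (D : DP k l → DP k l) (C : Finset (DP k l)) (h : ℕ)
    (v : Fin l × ℕ) : Set (DP k l) :=
  {p | ∃ c ∈ C, ∃ q : ℕ, p = D^[q] c ∧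
    ((leader r.le c).2 + q ≤ h ∨ rlt r.le ((leader r.le c).1, (leader r.le c).2 + q) v)}

set_option maxHeartbeats 1000000 in
theorem key_lemma (hD : IsDeriv δ D) (hr : r.Orderly) (C : Finset (DP k l))
    (hCauto : Autoreduced r.le properDeriv C) (hCcoh : Coherent r D C)
    {h : ℕ} (hh : ∀ f ∈ C, ordOf f ≤ h) (N : ℕ) :
    ∀ v : Fin l × ℕ, phiM r v ≤ N → ∀ x : DP k l, (∀ w ∈ x.vars, w.2 ≤ h) →
      ∀ s ∈ Submonoid.closure {Hset r.le C}, s * x ∈ Ideal.span (belowGens r D C h v) →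
      ∃ s' ∈ Submonoid.closure {Hset r.le C}, s' * x ∈ Ideal.span (goodGens r D C h) := by
  classical
  -- preliminary facts
  have hvne : ∀ c ∈ C, c.vars.Nonempty := hCauto.1
  have hcvars : ∀ c ∈ C, ∀ w ∈ c.vars, w.2 ≤ h := by
    intro c hc w hw
    exact le_trans (Finset.le_sup (f := fun v : Fin l × ℕ => v.2) hw) (hh c hc)
  have hlead_le : ∀ c ∈ C, (leader r.le c).2 ≤ h :=
    fun c hc => hcvars c hc _ (leader_mem_vars r (hvne c hc))
  have hHCvars : ∀ w ∈ (Hset r.le C).vars, w.2 ≤ h := by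
    intro w hw
    obtain ⟨c, hc, hw⟩ := Finset.mem_biUnion.mp (vars_Hset_subset r C hw)
    exact hcvars c hc w hw
  have hclosure : ∀ s ∈ Submonoid.closure {Hset r.le C}, ∀ w ∈ s.vars, w.2 ≤ h := by
    intro s hs w hw
    obtain ⟨n, rfl⟩ := Submonoid.mem_closure_singleton.mp hs
    exact hHCvars w (vars_pow _ _ hw)
  have below_free : ∀ v : Fin l × ℕ, h < v.2 → ∀ p ∈ belowGens r D C h v, v ∉ p.vars := by
    rintro v hv p ⟨c, hc, q, rfl, hcond⟩ hmem
    have hle := vars_Dq_rle hD hr (hvne c hc) q hmem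
    rcases hcond with hgood | hrk
    · have := ord_le_of_rle hr hle
      have := hlead_le c hc
      omega
    · exact hrk.2 (r.le_antisymm _ _ hrk.1 hle)
  have lower_subset : ∀ v : Fin l × ℕ,
      lowerDerivs r D C v ⊆ belowGens r D C h v := by
    rintro v p ⟨g, hg, q, rfl, hrlt⟩
    exact ⟨g, hg, q, rfl, Or.inr hrlt⟩
  -- main induction
  induction N using Nat.strong_induction_on with
  | _ N ih =>
  intro v hNv x hx s hs hmem
  obtain ⟨d, hdsupp, hdsum⟩ := Submodule.mem_span_set.mp hmem
  have hwit : ∀ p : DP k l, p ∈ d.support → ∃ c, c ∈ C ∧ ∃ q : ℕ, p = D^[q] c ∧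
      ((leader r.le c).2 + q ≤ h ∨
        rlt r.le ((leader r.le c).1, (leader r.le c).2 + q) v) :=
    fun p hp => by
      have := hdsupp hp
      obtain ⟨c, hc, q, hq1, hq2⟩ := this
      exact ⟨c, hc, q, hq1, hq2⟩
  choose! cW hWC qW hWeq hWcond using hwit
  set B : Finset (DP k l) :=
    d.support.filter (fun p => ¬((leader r.le (cW p)).2 + qW p ≤ h)) with hB
  by_cases hBne : B.Nonempty
  case neg =>
    -- all generators in the representation are good
    refine ⟨s, hs, ?_⟩
    rw [← hdsum, Finsupp.sum]
    apply Ideal.sum_mem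
    intro p hp
    have hgood : (leader r.le (cW p)).2 + qW p ≤ h := by
      by_contra hcon
      exact hBne ⟨p, Finset.mem_filter.mpr ⟨hp, hcon⟩⟩
    rw [smul_eq_mul]
    exact Ideal.mul_mem_left _ _
      (Ideal.subset_span ⟨cW p, hWC p hp, qW p, hWeq p hp, hgood⟩)
  case pos =>
  -- find the maximal bad derived leader v'
  obtain ⟨v', hv'mem, hv'max⟩ := finset_exists_max r
    (B.image (fun p => ((leader r.le (cW p)).1, (leader r.le (cW p)).2 + qW p)))
    (hBne.image _)
  obtain ⟨p0, hp0B, hv'eq⟩ := Finset.mem_image.mp hv'mem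
  have hp0supp : p0 ∈ d.support := (Finset.mem_filter.mp hp0B).1
  have hp0bad : ¬((leader r.le (cW p0)).2 + qW p0 ≤ h) := (Finset.mem_filter.mp hp0B).2
  have hc0 : cW p0 ∈ C := hWC p0 hp0supp
  have hv'2 : (leader r.le (cW p0)).2 + qW p0 = v'.2 := by rw [← hv'eq]
  have hv'1 : (leader r.le (cW p0)).1 = v'.1 := by rw [← hv'eq]
  have hv'h : h < v'.2 := by omega
  have hrltv : rlt r.le v' v := by
    rcases hWcond p0 hp0supp with hgood | hrk
    · exact absurd hgood hp0bad
    · rwa [hv'eq] at hrk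
  have hq0pos : 1 ≤ qW p0 := by
    have := hlead_le (cW p0) hc0
    omega
  set S0 : DP k l := separant r.le (cW p0) with hS0def
  have hS0ne : S0 ≠ 0 := separant_ne_zero r (hvne _ hc0)
  have hS0vars : v' ∉ S0.vars := by
    intro hcon
    have := hcvars _ hc0 v' (vars_separant r (cW p0) hcon)
    omega
  obtain ⟨T0, hT0eq, hT0v⟩ := Dq_shape hD hr (hvne _ hc0) (qW p0) hq0pos
  rw [hv'eq] at hT0eq hT0v
  have hp0eq : p0 = S0 * X v' + T0 := by
    rw [hWeq p0 hp0supp, hT0eq]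
  have hT0vars : v' ∉ T0.vars := fun hcon => (hT0v _ hcon).2 rfl
  -- the part of the representation with derived leader exactly v'
  set J : Finset (DP k l) :=
    B.filter (fun p => ((leader r.le (cW p)).1, (leader r.le (cW p)).2 + qW p) = v') with hJ
  have hJsupp : J ⊆ d.support :=
    (Finset.filter_subset _ _).trans (Finset.filter_subset _ _)
  have hp0J : p0 ∈ J := Finset.mem_filter.mpr ⟨hp0B, hv'eq⟩
  -- terms not in J lie in belowGens v'
  have hA : ∀ p ∈ d.support, p ∉ J → p ∈ belowGens r D C h v' := by
    intro p hp hpJ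
    by_cases hgood : (leader r.le (cW p)).2 + qW p ≤ h
    · exact ⟨cW p, hWC p hp, qW p, hWeq p hp, Or.inl hgood⟩
    · have hpB : p ∈ B := Finset.mem_filter.mpr ⟨hp, hgood⟩
      have hne : ((leader r.le (cW p)).1, (leader r.le (cW p)).2 + qW p) ≠ v' := by
        intro hcon
        exact hpJ (Finset.mem_filter.mpr ⟨hpB, hcon⟩)
      have hle : r.le ((leader r.le (cW p)).1, (leader r.le (cW p)).2 + qW p) v' :=
        hv'max _ (Finset.mem_image.mpr ⟨p, hpB, rfl⟩)
      exact ⟨cW p, hWC p hp, qW p, hWeq p hp, Or.inr ⟨hle, hne⟩⟩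
  -- coherence for elements of J
  have hcohJ : ∀ j ∈ J, ∃ t, t ∈ Submonoid.closure {Hset r.le C} ∧
      t * (S0 * j - separant r.le (cW j) * p0) ∈ Ideal.span (lowerDerivs r D C v') := by
    intro j hj
    have hjsupp : j ∈ d.support := hJsupp hj
    have hjlead : ((leader r.le (cW j)).1, (leader r.le (cW j)).2 + qW j) = v' :=
      (Finset.mem_filter.mp hj).2
    have hj2 : (leader r.le (cW j)).2 + qW j = v'.2 := by rw [← hjlead]
    have hj1 : (leader r.le (cW j)).1 = v'.1 := by rw [← hjlead]
    have hcj : cW j ∈ C := hWC j hjsupp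
    have hsub1 : v'.2 - (leader r.le (cW j)).2 = qW j := by omega
    have hsub0 : v'.2 - (leader r.le (cW p0)).2 = qW p0 := by omega
    have hcoh := hCcoh (cW j) hcj (cW p0) hc0 v' hj1.symm hv'1.symm
      (by omega) (by omega)
    rw [hsub1, hsub0] at hcoh
    obtain ⟨t, htcl, htmem⟩ := hcoh
    refine ⟨t, htcl, ?_⟩
    rw [← hWeq j hjsupp, ← hWeq p0 hp0supp] at htmem
    exact htmem
  choose! tW htWcl htWmem using hcohJ
  -- localization at S0
  set ι : DP k l →+* Localization.Away S0 := locMap S0 with hι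
  set χ : DP k l →+* Localization.Away S0 := chiHom S0 T0 v' with hχ
  have hχs : χ s = ι s := chiHom_eq_of_not_mem S0 T0 v' (by
    intro hcon
    have := hclosure s hs v' hcon
    omega)
  have hχx : χ x = ι x := chiHom_eq_of_not_mem S0 T0 v' (by
    intro hcon
    have := hx v' hcon
    omega)
  have hχA : ∀ p ∈ d.support, p ∉ J → χ p = ι p := by
    intro p hp hpJ
    exact chiHom_eq_of_not_mem S0 T0 v' (below_free v' hv'h p (hA p hp hpJ))
  have hχJ : ∀ j ∈ J, ι S0 * χ j = ι (S0 * j - separant r.le (cW j) * p0) := by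
    intro j hj
    have hjsupp : j ∈ d.support := hJsupp hj
    have hjlead : ((leader r.le (cW j)).1, (leader r.le (cW j)).2 + qW j) = v' :=
      (Finset.mem_filter.mp hj).2
    have hjbad : ¬((leader r.le (cW j)).2 + qW j ≤ h) :=
      (Finset.mem_filter.mp ((Finset.filter_subset _ _) hj)).2
    have hcj : cW j ∈ C := hWC j hjsupp
    have hqjpos : 1 ≤ qW j := by
      have := hlead_le (cW j) hcj
      omega
    obtain ⟨Tj, hTjeq, hTjv⟩ := Dq_shape hD hr (hvne _ hcj) (qW j) hqjpos
    rw [hjlead] at hTjeq hTjv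
    set Sj : DP k l := separant r.le (cW j) with hSjdef
    have hjeq : j = Sj * X v' + Tj := by
      conv_lhs => rw [hWeq j hjsupp]
      exact hTjeq
    have hTjvars : v' ∉ Tj.vars := fun hcon => (hTjv _ hcon).2 rfl
    have hSjvars : v' ∉ Sj.vars := by
      intro hcon
      have := hcvars _ hcj v' (vars_separant r (cW j) hcon)
      omega
    have hshape := chiHom_shape S0 T0 v' hSjvars hTjvars
    rw [← hjeq] at hshape
    rw [hshape]
    congr 1
    rw [hjeq, hp0eq]
    ring
  -- clear denominators
  obtain ⟨n, hn⟩ := exists_common_denom S0 d.support (fun p => χ (d p))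
  choose! bW hbW using hn
  -- the master identity
  have hχsx : χ (s * x) = ι (s * x) := by
    rw [map_mul, map_mul, hχs, hχx]
  have e1 : ι (s * x) = ∑ p ∈ d.support, χ (d p) * χ p := by
    rw [← hχsx, ← hdsum, Finsupp.sum, map_sum]
    apply Finset.sum_congr rfl
    intro p hp
    rw [smul_eq_mul, map_mul]
  have e2 : ι (S0 ^ (n + 1) * (s * x))
      = ∑ p ∈ d.support, ι (S0 ^ n) * χ (d p) * (ι S0 * χ p) := by
    rw [map_mul, e1, Finset.mul_sum]
    apply Finset.sum_congr rfl
    intro p hp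
    rw [pow_succ, map_mul]
    ring
  have e3 : ι (S0 ^ (n + 1) * (s * x))
      = ι ((∑ p ∈ d.support \ J, bW p * (S0 * p))
          + ∑ j ∈ J, bW j * (S0 * j - separant r.le (cW j) * p0)) := by
    rw [e2, ← Finset.sum_sdiff hJsupp, map_add, map_sum, map_sum]
    congr 1
    · apply Finset.sum_congr rfl
      intro p hp
      have hp1 : p ∈ d.support := (Finset.mem_sdiff.mp hp).1
      have hp2 : p ∉ J := (Finset.mem_sdiff.mp hp).2
      rw [hbW p hp1, hχA p hp1 hp2, map_mul, map_mul]
    · apply Finset.sum_congr rfl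
      intro j hj
      have hj1 : j ∈ d.support := hJsupp hj
      rw [hbW j hj1, hχJ j hj, map_mul]
  have key_eq : S0 ^ (n + 1) * (s * x)
      = (∑ p ∈ d.support \ J, bW p * (S0 * p))
          + ∑ j ∈ J, bW j * (S0 * j - separant r.le (cW j) * p0) :=
    locMap_injective S0 hS0ne e3
  -- multiply by the cofactor to replace S0-powers by Hset-powers
  set W : DP k l := initial (leader r.le (cW p0)) (cW p0) *
    ∏ f ∈ C.erase (cW p0), (initial (leader r.le f) f * separant r.le f) with hW
  have hHW : Hset r.le C = S0 * W := by
    rw [hW, hS0def]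
    unfold Hset
    rw [← Finset.mul_prod_erase C _ hc0]
    ring
  set tJ : DP k l := ∏ j ∈ J, tW j with htJ
  have htJcl : tJ ∈ Submonoid.closure {Hset r.le C} :=
    Submonoid.prod_mem _ (fun j hj => htWcl j hj)
  have hfinal : (Hset r.le C) ^ (n + 1) * tJ * (s * x)
      ∈ Ideal.span (belowGens r D C h v') := by
    have : (Hset r.le C) ^ (n + 1) * tJ * (s * x)
        = W ^ (n + 1) * tJ * (S0 ^ (n + 1) * (s * x)) := by
      rw [hHW]
      ring
    rw [this, key_eq, mul_add]
    apply Ideal.add_mem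
    · rw [Finset.mul_sum]
      apply Ideal.sum_mem
      intro p hp
      have hp1 : p ∈ d.support := (Finset.mem_sdiff.mp hp).1
      have hp2 : p ∉ J := (Finset.mem_sdiff.mp hp).2
      have : W ^ (n + 1) * tJ * (bW p * (S0 * p))
          = (W ^ (n + 1) * tJ * bW p * S0) * p := by ring
      rw [this]
      exact Ideal.mul_mem_left _ _ (Ideal.subset_span (hA p hp1 hp2))
    · rw [Finset.mul_sum]
      apply Ideal.sum_mem
      intro j hj
      have : W ^ (n + 1) * tJ * (bW j * (S0 * j - separant r.le (cW j) * p0))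
          = (W ^ (n + 1) * (∏ j' ∈ J.erase j, tW j') * bW j)
              * (tW j * (S0 * j - separant r.le (cW j) * p0)) := by
        rw [htJ, ← Finset.mul_prod_erase J tW hj]
        ring
      rw [this]
      refine Ideal.mul_mem_left _ _ ?_
      exact Ideal.span_mono (lower_subset v') (htWmem j hj)
  -- apply the induction hypothesis at v'
  have hs'' : (Hset r.le C) ^ (n + 1) * tJ * s ∈ Submonoid.closure {Hset r.le C} := by
    refine Submonoid.mul_mem _ (Submonoid.mul_mem _ ?_ htJcl) hs
    exact Submonoid.pow_mem _ (Submonoid.subset_closure (Set.mem_singleton _)) _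
  have hphi : phiM r v' < N := lt_of_lt_of_le (phiM_strict_mono hr hrltv) hNv
  refine ih (phiM r v') hphi v' (le_refl _) x hx
    ((Hset r.le C) ^ (n + 1) * tJ * s) hs'' ?_
  have : (Hset r.le C) ^ (n + 1) * tJ * s * x
      = (Hset r.le C) ^ (n + 1) * tJ * (s * x) := by ring
  rw [this]
  exact hfinal

end KeyLemma

/-- Rosenfeld-type intersection, ordinary case.
Let `C` be a coherent autoreduced set in `k{y_1,…,y_l}` w.r.t. an orderly ranking with
`1 ∉ [C]:H_C^∞`, and `h ≥ ord C_s` for every element `C_s` of `C`.  Then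
`[C]:H_C^∞ ∩ k[y_i^{(j)} : j ≤ h]` equals the saturation
`(δ^q C_s : ord (δ^q u_{C_s}) ≤ h) : H_C^∞` computed in the polynomial ring
`k[y_i^{(j)} : j ≤ h]`. -/
theorem statement1 {k : Type*} [Field k] [CharZero k] {l : ℕ} [Nonempty (Fin l)]
    (δ : k → k) (hδ : IsFieldDeriv δ)
    (D : DP k l → DP k l) (hD : IsDeriv δ D)
    (r : Ranking l) (hr : r.Orderly)
    (C : Finset (DP k l)) (hCauto : Autoreduced r.le properDeriv C)
    (hCcoh : Coherent r D C)
    (hC1 : (1 : DP k l) ∉ sat (diffIdeal1 D ↑C) {Hset r.le C})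
    (h : ℕ) (hh : ∀ f ∈ C, ordOf f ≤ h) :
    sat (diffIdeal1 D ↑C) {Hset r.le C} ∩
        (MvPolynomial.supported k {v : Fin l × ℕ | v.2 ≤ h} : Set (DP k l)) =
      satIn (MvPolynomial.supported k {v : Fin l × ℕ | v.2 ≤ h} : Set (DP k l))
        {p | ∃ c ∈ C, ∃ q : ℕ, p = D^[q] c ∧ (leader r.le c).2 + q ≤ h}
        {Hset r.le C} := by
  classical
  have hvne : ∀ c ∈ C, c.vars.Nonempty := hCauto.1
  have hcvars : ∀ c ∈ C, ∀ w ∈ c.vars, w.2 ≤ h := by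
    intro c hc w hw
    exact le_trans (Finset.le_sup (f := fun v : Fin l × ℕ => v.2) hw) (hh c hc)
  have hHCvars : ∀ w ∈ (Hset r.le C).vars, w.2 ≤ h := by
    intro w hw
    obtain ⟨c, hc, hw⟩ := Finset.mem_biUnion.mp (vars_Hset_subset r C hw)
    exact hcvars c hc w hw
  have hclosure : ∀ s ∈ Submonoid.closure {Hset r.le C}, ∀ w ∈ s.vars, w.2 ≤ h := by
    intro s hs w hw
    obtain ⟨n, rfl⟩ := Submonoid.mem_closure_singleton.mp hs
    exact hHCvars w (vars_pow _ _ hw)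
  have hgens_ord : ∀ p ∈ goodGens r D C h, ∀ w ∈ p.vars, w.2 ≤ h := by
    rintro p ⟨c, hc, q, rfl, hq⟩ w hw
    have := vars_Dq_ord hD hr (hvne c hc) q hw
    omega
  -- the truncation homomorphism
  set π : DP k l →+* DP k l :=
    eval₂Hom (MvPolynomial.C : k →+* DP k l) (fun w => if w.2 ≤ h then X w else 0) with hπ
  have hπfix : ∀ f : DP k l, (∀ w ∈ f.vars, w.2 ≤ h) → π f = f := by
    intro f hf
    have h1 := eval₂_eq_of_vars (RingHom.id (DP k l))
      (fun w => if w.2 ≤ h then X w else 0) f (by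
        intro w hw
        rw [if_pos (hf w hw)]
        rfl)
    rw [RingHom.id_comp] at h1
    exact h1
  have hπsub : ∀ f : DP k l,
      π f ∈ (MvPolynomial.supported k {v : Fin l × ℕ | v.2 ≤ h} : Set (DP k l)) := by
    intro f
    rw [SetLike.mem_coe]
    induction f using MvPolynomial.induction_on with
    | C a =>
      rw [hπ, eval₂Hom_C]
      exact Subalgebra.algebraMap_mem _ a
    | add p q ihp ihq =>
      rw [map_add]
      exact Subalgebra.add_mem _ ihp ihq
    | mul_X p w ih =>
      rw [map_mul]
      refine Subalgebra.mul_mem _ ih ?_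
      rw [hπ, eval₂Hom_X']
      by_cases hw : w.2 ≤ h
      · rw [if_pos hw]
        exact MvPolynomial.X_mem_supported.mpr hw
      · rw [if_neg hw]
        exact Subalgebra.zero_mem _
  apply Set.eq_of_subset_of_subset
  · -- hard direction
    rintro x ⟨⟨s, hscl, hmem⟩, hxsup⟩
    have hx : ∀ w ∈ x.vars, w.2 ≤ h := by
      intro w hw
      have := (mem_supported.mp (SetLike.mem_coe.mp hxsup)) (Finset.mem_coe.mpr hw)
      exact this
    rw [diffIdeal1_eq_span hD C] at hmem
    -- choose a bound v0 dominating all derivatives appearing in the representation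
    obtain ⟨d, hdsupp, hdsum⟩ := Submodule.mem_span_set.mp hmem
    have hwit : ∀ p : DP k l, p ∈ d.support → ∃ c, c ∈ C ∧ ∃ q : ℕ, p = D^[q] c :=
      fun p hp => by
        obtain ⟨c, hc, q, hq⟩ := hdsupp hp
        exact ⟨c, hc, q, hq⟩
    choose! cW hWC qW hWeq using hwit
    set n0 : ℕ := 1 + h + d.support.sup (fun p => (leader r.le (cW p)).2 + qW p) with hn0
    set v0 : Fin l × ℕ := (Classical.arbitrary (Fin l), n0) with hv0
    have hbelow : s * x ∈ Ideal.span (belowGens r D C h v0) := by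
      rw [← hdsum, Finsupp.sum]
      apply Ideal.sum_mem
      intro p hp
      rw [smul_eq_mul]
      refine Ideal.mul_mem_left _ _ (Ideal.subset_span ?_)
      refine ⟨cW p, hWC p hp, qW p, hWeq p hp, Or.inr ?_⟩
      apply hr
      have hle : (leader r.le (cW p)).2 + qW p
          ≤ d.support.sup (fun p => (leader r.le (cW p)).2 + qW p) :=
        Finset.le_sup (f := fun p => (leader r.le (cW p)).2 + qW p) hp
      simp only [hv0, hn0]
      omega
    obtain ⟨s', hs'cl, hs'mem⟩ := key_lemma hD hr C hCauto hCcoh hh (phiM r v0) v0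
      (le_refl _) x hx s hscl hbelow
    -- convert to the subring statement via truncation
    refine ⟨hxsup, s', hs'cl, ?_⟩
    obtain ⟨d', hd'supp, hd'sum⟩ := Submodule.mem_span_set.mp hs'mem
    have hπs'x : π (s' * x) = s' * x := by
      apply hπfix
      intro w hw
      rcases Finset.mem_union.mp (vars_mul _ _ hw) with hws | hwx
      · exact hclosure s' hs'cl w hws
      · exact hx w hwx
    have heq : s' * x = ∑ p ∈ d'.support, π (d' p) * p := by
      conv_lhs => rw [← hπs'x, ← hd'sum]
      rw [Finsupp.sum, map_sum]
      apply Finset.sum_congr rfl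
      intro p hp
      rw [smul_eq_mul, map_mul, hπfix p (hgens_ord p (hd'supp hp))]
    -- package as a `spanIn` element
    set e := d'.support.equivFin with he
    refine ⟨d'.support.card, fun i => π (d' (e.symm i)), fun i => (e.symm i : DP k l),
      fun i => hπsub _, fun i => hd'supp (e.symm i).2, ?_⟩
    rw [heq]
    rw [← Finset.sum_coe_sort d'.support (fun p => π (d' p) * p)]
    exact (Fintype.sum_equiv e.symm _ _ (fun i => rfl)).symm
  · -- easy direction
    rintro x ⟨hxsup, s, hscl, m, cf, gf, hcf, hgf, heq⟩
    refine ⟨⟨s, hscl, ?_⟩, hxsup⟩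
    rw [diffIdeal1_eq_span hD C, heq]
    apply Ideal.sum_mem
    intro i _
    obtain ⟨c, hc, q, hq, _⟩ := hgf i
    exact Ideal.mul_mem_left _ _ (Ideal.subset_span ⟨c, hc, q, hq⟩)

end DiffAlg
end

section
/- In the ordinary differential polynomial ring k{x,y,z} over a differential field k of characteristic zero, let A = {x(x−1), xy, xz} and fix a ranking with x < y < z. Then: (1) 1 ∉ [A]:H_A^∞; (2) the radical differential ideal {A} admits the minimal prime decomposition {A} = [x] ∩ [x−1, y, z]; and (3) A is a characteristic set of {A}, so that {A} satisfies the property of consistency. -/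
open MvPolynomial

namespace DiffAlg

/-! ### Auxiliary material for the proof of Statement 10 -/

section Aux

variable {k : Type*} [Field k] [CharZero k]

set_option linter.unusedSectionVars false

namespace S10

variable {δ : k → k} {l : ℕ} {D : DP k l → DP k l}

/-- basic facts about a single derivation -/
theorem D_one (hD : IsDeriv δ D) : D 1 = 0 := by
  have h := hD.leibniz 1 1
  simp only [one_mul, mul_one] at h
  have h2 : D (1 : DP k l) = D 1 + D 1 := h
  exact (left_eq_add.mp h2)

theorem D_zero (hD : IsDeriv δ D) : D 0 = 0 := by
  have h : D ((0 : DP k l) + 0) = D 0 + D 0 := hD.map_add 0 0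
  rw [add_zero] at h
  exact left_eq_add.mp h

theorem D_sub (hD : IsDeriv δ D) (f g : DP k l) : D (f - g) = D f - D g := by
  have h : D (g + (f - g)) = D g + D (f - g) := hD.map_add g (f - g)
  have h2 : D f = D g + D (f - g) := by rw [← h]; ring_nf
  rw [h2]; ring

theorem D_iter_X (hD : IsDeriv δ D) (i : Fin l) (m n : ℕ) :
    D^[n] (X (i, m)) = X (i, m + n) := by
  induction n generalizing m with
  | zero => simp
  | succ n ih =>
    rw [Function.iterate_succ_apply, hD.map_X (i, m)]
    simpa [Nat.add_assoc, Nat.add_comm 1 n] using ih (m + 1)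

/-- Basic facts about `diffIdeal1` / `radDiffIdeal1`. -/
theorem isDiffIdeal1_iff {R : Type*} [CommRing R] (D' : R → R) (I : Ideal R) :
    IsDiffIdeal1 D' I ↔ ∀ f ∈ I, D' f ∈ I := by
  constructor
  · intro h f hf; exact h () f hf
  · intro h j f hf; exact h f hf

theorem subset_diffIdeal1 {R : Type*} [CommRing R] (D' : R → R) (F : Set R) :
    F ⊆ (diffIdeal1 D' F : Set R) := by
  intro f hf
  simp only [diffIdeal1, diffIdeal, SetLike.mem_coe, Ideal.mem_sInf]
  intro I hI; exact hI.1 hf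

theorem diffIdeal1_isDiff {R : Type*} [CommRing R] (D' : R → R) (F : Set R) :
    IsDiffIdeal1 D' (diffIdeal1 D' F) := by
  intro j f hf
  simp only [diffIdeal1, diffIdeal, Ideal.mem_sInf] at hf ⊢
  intro I hI; exact hI.2 j f (hf hI)

theorem diffIdeal1_le {R : Type*} [CommRing R] {D' : R → R} {F : Set R} {I : Ideal R}
    (hF : F ⊆ I) (hI : IsDiffIdeal1 D' I) : diffIdeal1 D' F ≤ I :=
  sInf_le ⟨hF, hI⟩

theorem subset_radDiffIdeal1 {R : Type*} [CommRing R] (D' : R → R) (F : Set R) :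
    F ⊆ (radDiffIdeal1 D' F : Set R) := by
  intro f hf
  simp only [radDiffIdeal1, radDiffIdeal, SetLike.mem_coe, Ideal.mem_sInf]
  intro I hI; exact hI.1 hf

theorem radDiffIdeal1_isDiff {R : Type*} [CommRing R] (D' : R → R) (F : Set R) :
    IsDiffIdeal1 D' (radDiffIdeal1 D' F) := by
  intro j f hf
  simp only [radDiffIdeal1, radDiffIdeal, Ideal.mem_sInf] at hf ⊢
  intro I hI; exact hI.2.1 j f (hf hI)

theorem radDiffIdeal1_le {R : Type*} [CommRing R] {D' : R → R} {F : Set R} {I : Ideal R}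
    (hF : F ⊆ I) (hI : IsDiffIdeal1 D' I) (hrad : I.IsRadical) : radDiffIdeal1 D' F ≤ I :=
  sInf_le ⟨hF, hI, hrad⟩

theorem iterate_mem {R : Type*} [CommRing R] {D' : R → R} {I : Ideal R}
    (hI : IsDiffIdeal1 D' I) {f : R} (hf : f ∈ I) (n : ℕ) : D'^[n] f ∈ I := by
  induction n with
  | zero => simpa using hf
  | succ n ih => rw [Function.iterate_succ_apply']; exact hI () _ ih

/-! ### The two prime differential ideals -/

/-- Kill all derivatives of `x`, keep the others. -/
noncomputable def phi1 : DP k 3 →+* DP k 3 :=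
  (aeval (fun u : Fin 3 × ℕ => if u.1 = 0 then 0 else X u)).toRingHom

/-- The point `x = 1, everything else = 0`. -/
def pt : Fin 3 × ℕ → k := fun u => if u = ((0 : Fin 3), (0 : ℕ)) then 1 else 0

noncomputable def phi2 : DP k 3 →+* k := eval (pt (k := k))

def G1 : Set (DP k 3) := Set.range fun n : ℕ => X ((0 : Fin 3), n)

def G2 : Set (DP k 3) := Set.range fun u : Fin 3 × ℕ => X u - C (pt u)

theorem phi1_X (u : Fin 3 × ℕ) :
    phi1 (k := k) (X u) = if u.1 = 0 then 0 else X u := by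
  simp [phi1]

theorem phi2_X (u : Fin 3 × ℕ) : phi2 (k := k) (X u) = pt u := by
  simp [phi2]

theorem sub_phi1_mem (f : DP k 3) : f - phi1 (k := k) f ∈ Ideal.span (G1 (k := k)) := by
  induction f using MvPolynomial.induction_on with
  | C a => simp [phi1]
  | add p q hp hq =>
    have h : (p + q) - phi1 (k := k) (p + q)
        = (p - phi1 (k := k) p) + (q - phi1 (k := k) q) := by
      rw [map_add]; ring
    rw [h]; exact Ideal.add_mem _ hp hq
  | mul_X p u hp =>
    have h : (p * X u) - phi1 (k := k) (p * X u)
        = (p - phi1 (k := k) p) * X u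
          + phi1 (k := k) p * (X u - phi1 (k := k) (X u)) := by
      rw [map_mul]; ring
    rw [h]
    refine Ideal.add_mem _ (Ideal.mul_mem_right _ _ hp) ?_
    rw [phi1_X]
    by_cases hu : u.1 = 0
    · rw [if_pos hu, sub_zero]
      refine Ideal.mul_mem_left _ _ (Ideal.subset_span ?_)
      exact ⟨u.2, by show X ((0 : Fin 3), u.2) = X u; rw [show ((0 : Fin 3), u.2) = u from Prod.ext hu.symm rfl]⟩
    · rw [if_neg hu, sub_self, mul_zero]; exact Ideal.zero_mem _

theorem sub_phi2_mem (f : DP k 3) :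
    f - C (phi2 (k := k) f) ∈ Ideal.span (G2 (k := k)) := by
  induction f using MvPolynomial.induction_on with
  | C a => simp [phi2]
  | add p q hp hq =>
    have h : (p + q) - C (phi2 (k := k) (p + q))
        = (p - C (phi2 (k := k) p)) + (q - C (phi2 (k := k) q)) := by
      rw [map_add, map_add]; ring
    rw [h]; exact Ideal.add_mem _ hp hq
  | mul_X p u hp =>
    have h : (p * X u) - C (phi2 (k := k) (p * X u))
        = (p - C (phi2 (k := k) p)) * X u
          + C (phi2 (k := k) p) * (X u - C (pt u)) := by
      rw [map_mul, phi2_X, map_mul]; ring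
    rw [h]
    refine Ideal.add_mem _ (Ideal.mul_mem_right _ _ hp) ?_
    exact Ideal.mul_mem_left _ _ (Ideal.subset_span ⟨u, rfl⟩)

theorem span_G1_eq_ker : Ideal.span (G1 (k := k)) = RingHom.ker (phi1 (k := k)) := by
  apply le_antisymm
  · rw [Ideal.span_le]
    rintro _ ⟨n, rfl⟩
    simp [RingHom.mem_ker, phi1_X]
  · intro f hf
    rw [RingHom.mem_ker] at hf
    have := sub_phi1_mem (k := k) f
    rwa [hf, sub_zero] at this

theorem span_G2_eq_ker : Ideal.span (G2 (k := k)) = RingHom.ker (phi2 (k := k)) := by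
  apply le_antisymm
  · rw [Ideal.span_le]
    rintro _ ⟨u, rfl⟩
    simp [RingHom.mem_ker, phi2, pt]
  · intro f hf
    rw [RingHom.mem_ker] at hf
    have := sub_phi2_mem (k := k) f
    rwa [hf, map_zero, sub_zero] at this

theorem span_G1_prime : (Ideal.span (G1 (k := k))).IsPrime := by
  rw [span_G1_eq_ker]; exact RingHom.ker_isPrime _

theorem span_G2_prime : (Ideal.span (G2 (k := k))).IsPrime := by
  rw [span_G2_eq_ker]; exact RingHom.ker_isPrime _

theorem delta_one {δ : k → k} (hδ : IsFieldDeriv δ) : δ 1 = 0 := by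
  have h := hδ.leibniz 1 1
  rw [one_mul, one_mul] at h
  exact (left_eq_add.mp h)

theorem delta_zero {δ : k → k} (hδ : IsFieldDeriv δ) : δ 0 = 0 := by
  have h := hδ.map_add 0 0
  rw [add_zero] at h
  exact (left_eq_add.mp h)

variable {δ : k → k} {D : DP k 3 → DP k 3}

theorem span_G1_isDiff (hD : IsDeriv δ D) : IsDiffIdeal1 D (Ideal.span (G1 (k := k))) := by
  rw [isDiffIdeal1_iff]
  intro f hf
  induction hf using Submodule.span_induction with
  | mem g hg =>
    obtain ⟨n, rfl⟩ := hg
    rw [hD.map_X]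
    exact Ideal.subset_span ⟨n + 1, rfl⟩
  | zero => rw [D_zero hD]; exact Ideal.zero_mem _
  | add p q hp hq ihp ihq => rw [hD.map_add]; exact Ideal.add_mem _ ihp ihq
  | smul a p hp ihp =>
    rw [smul_eq_mul, hD.leibniz]
    exact Ideal.add_mem _ (Ideal.mul_mem_left _ _ ihp) (Ideal.mul_mem_right _ _ hp)

theorem span_G2_isDiff (hδ : IsFieldDeriv δ) (hD : IsDeriv δ D) :
    IsDiffIdeal1 D (Ideal.span (G2 (k := k))) := by
  rw [isDiffIdeal1_iff]
  intro f hf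
  induction hf using Submodule.span_induction with
  | mem g hg =>
    obtain ⟨u, rfl⟩ := hg
    rw [D_sub hD, hD.map_X, hD.map_C]
    have hδpt : δ (pt u) = 0 := by
      unfold pt; split <;> simp [delta_one hδ, delta_zero hδ]
    rw [hδpt, map_zero, sub_zero]
    have : X (u.1, u.2 + 1) = X (u.1, u.2 + 1) - C (pt (k := k) (u.1, u.2 + 1)) := by
      have : pt (k := k) (u.1, u.2 + 1) = 0 := by
        unfold pt
        rw [if_neg]
        intro h
        exact Nat.succ_ne_zero u.2 (congrArg Prod.snd h)
      rw [this, map_zero, sub_zero]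
    rw [this]
    exact Ideal.subset_span ⟨(u.1, u.2 + 1), rfl⟩
  | zero => rw [D_zero hD]; exact Ideal.zero_mem _
  | add p q hp hq ihp ihq => rw [hD.map_add]; exact Ideal.add_mem _ ihp ihq
  | smul a p hp ihp =>
    rw [smul_eq_mul, hD.leibniz]
    exact Ideal.add_mem _ (Ideal.mul_mem_left _ _ ihp) (Ideal.mul_mem_right _ _ hp)

/-- `[x] = span G1`. -/
theorem diffIdeal1_x (hD : IsDeriv δ D) :
    diffIdeal1 D {X ((0 : Fin 3), (0 : ℕ))} = Ideal.span (G1 (k := k)) := by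
  apply le_antisymm
  · refine diffIdeal1_le ?_ (span_G1_isDiff hD)
    rintro f rfl
    exact Ideal.subset_span ⟨0, rfl⟩
  · rw [Ideal.span_le]
    rintro _ ⟨n, rfl⟩
    have h0 : (X ((0 : Fin 3), (0 : ℕ)) : DP k 3)
        ∈ diffIdeal1 D {X ((0 : Fin 3), (0 : ℕ))} :=
      subset_diffIdeal1 _ _ rfl
    have := iterate_mem (diffIdeal1_isDiff D _) h0 n
    rwa [D_iter_X hD, Nat.zero_add] at this

/-- `[x-1, y, z] = span G2`. -/
theorem diffIdeal1_xyz (hδ : IsFieldDeriv δ) (hD : IsDeriv δ D) :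
    diffIdeal1 D {X ((0 : Fin 3), (0 : ℕ)) - 1, X ((1 : Fin 3), (0 : ℕ)),
      X ((2 : Fin 3), (0 : ℕ))} = Ideal.span (G2 (k := k)) := by
  have hx1 : (X ((0 : Fin 3), (0 : ℕ)) : DP k 3) - 1
      = X ((0 : Fin 3), (0 : ℕ)) - C (pt (k := k) ((0 : Fin 3), (0 : ℕ))) := by
    simp [pt]
  have hy : (X ((1 : Fin 3), (0 : ℕ)) : DP k 3)
      = X ((1 : Fin 3), (0 : ℕ)) - C (pt (k := k) ((1 : Fin 3), (0 : ℕ))) := by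
    simp [pt]
  have hz : (X ((2 : Fin 3), (0 : ℕ)) : DP k 3)
      = X ((2 : Fin 3), (0 : ℕ)) - C (pt (k := k) ((2 : Fin 3), (0 : ℕ))) := by
    simp [pt]
  apply le_antisymm
  · refine diffIdeal1_le ?_ (span_G2_isDiff hδ hD)
    intro f hf
    rcases hf with rfl | rfl | rfl
    · rw [hx1]; exact Ideal.subset_span ⟨_, rfl⟩
    · rw [hy]; exact Ideal.subset_span ⟨_, rfl⟩
    · rw [hz]; exact Ideal.subset_span ⟨_, rfl⟩
  · rw [Ideal.span_le]
    rintro _ ⟨u, rfl⟩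
    set J := diffIdeal1 D ({X ((0 : Fin 3), (0 : ℕ)) - 1, X ((1 : Fin 3), (0 : ℕ)),
      X ((2 : Fin 3), (0 : ℕ))} : Set (DP k 3)) with hJ
    have hJd := diffIdeal1_isDiff D ({X ((0 : Fin 3), (0 : ℕ)) - 1, X ((1 : Fin 3), (0 : ℕ)),
      X ((2 : Fin 3), (0 : ℕ))} : Set (DP k 3))
    have hmem1 : (X ((0 : Fin 3), (0 : ℕ)) : DP k 3) - 1 ∈ J :=
      subset_diffIdeal1 _ _ (by left; rfl)
    have hmemy : (X ((1 : Fin 3), (0 : ℕ)) : DP k 3) ∈ J :=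
      subset_diffIdeal1 _ _ (by right; left; rfl)
    have hmemz : (X ((2 : Fin 3), (0 : ℕ)) : DP k 3) ∈ J :=
      subset_diffIdeal1 _ _ (by right; right; rfl)
    obtain ⟨i, n⟩ := u
    fin_cases i
    · -- i = 0
      rcases n with _ | m
      · show X ((0 : Fin 3), (0:ℕ)) - C (pt (k := k) ((0 : Fin 3), (0:ℕ))) ∈ J
        rw [show pt (k := k) ((0 : Fin 3), 0) = 1 from if_pos rfl, map_one]
        exact hmem1
      · show X ((0 : Fin 3), (m+1:ℕ)) - C (pt (k := k) ((0 : Fin 3), (m+1:ℕ))) ∈ J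
        have hpt : pt (k := k) ((0 : Fin 3), m + 1) = 0 := by
          unfold pt; rw [if_neg (by intro h; exact Nat.succ_ne_zero m (congrArg Prod.snd h))]
        rw [hpt, map_zero, sub_zero]
        have hD1 : D (X ((0 : Fin 3), (0 : ℕ)) - 1) = X ((0 : Fin 3), (1 : ℕ)) := by
          rw [D_sub hD, D_one hD, sub_zero, hD.map_X]
        have := iterate_mem hJd hmem1 (m + 1)
        rwa [Function.iterate_succ_apply, hD1, D_iter_X hD, Nat.add_comm 1 m] at this
      
    · -- i = 1
      show X ((1 : Fin 3), n) - C (pt (k := k) ((1 : Fin 3), n)) ∈ J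
      have hpt : pt (k := k) ((1 : Fin 3), n) = 0 := by
        unfold pt
        rw [if_neg (by intro h; exact absurd (congrArg Prod.fst h) (show ¬((1:Fin 3) = 0) by decide))]
      rw [hpt, map_zero, sub_zero]
      have := iterate_mem hJd hmemy n
      rwa [D_iter_X hD, Nat.zero_add] at this
    · -- i = 2
      show X ((2 : Fin 3), n) - C (pt (k := k) ((2 : Fin 3), n)) ∈ J
      have hpt : pt (k := k) ((2 : Fin 3), n) = 0 := by
        unfold pt
        rw [if_neg (by intro h; exact absurd (congrArg Prod.fst h) (show ¬((2:Fin 3) = 0) by decide))]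
      rw [hpt, map_zero, sub_zero]
      have := iterate_mem hJd hmemz n
      rwa [D_iter_X hD, Nat.zero_add] at this

/-! ### The minimal decomposition -/

theorem A_subset_G1 {A : Finset (DP k 3)}
    (hA : (↑A : Set (DP k 3)) = {X ((0 : Fin 3), (0 : ℕ)) * (X ((0 : Fin 3), (0 : ℕ)) - 1),
      X ((0 : Fin 3), (0 : ℕ)) * X ((1 : Fin 3), (0 : ℕ)),
      X ((0 : Fin 3), (0 : ℕ)) * X ((2 : Fin 3), (0 : ℕ))}) :
    (↑A : Set (DP k 3)) ⊆ (Ideal.span (G1 (k := k)) : Set (DP k 3)) := by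
  rw [hA]
  have hx : (X ((0 : Fin 3), (0 : ℕ)) : DP k 3) ∈ Ideal.span (G1 (k := k)) :=
    Ideal.subset_span ⟨0, rfl⟩
  rintro f (rfl | rfl | rfl)
  · exact Ideal.mul_mem_right _ _ hx
  · exact Ideal.mul_mem_right _ _ hx
  · exact Ideal.mul_mem_right _ _ hx

theorem mem_G2_y : (X ((1 : Fin 3), (0 : ℕ)) : DP k 3) ∈ Ideal.span (G2 (k := k)) := by
  have : (X ((1 : Fin 3), (0 : ℕ)) : DP k 3)
      = X ((1 : Fin 3), (0 : ℕ)) - C (pt (k := k) ((1 : Fin 3), (0 : ℕ))) := by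
    simp [pt]
  rw [this]; exact Ideal.subset_span ⟨_, rfl⟩

theorem mem_G2_z : (X ((2 : Fin 3), (0 : ℕ)) : DP k 3) ∈ Ideal.span (G2 (k := k)) := by
  have : (X ((2 : Fin 3), (0 : ℕ)) : DP k 3)
      = X ((2 : Fin 3), (0 : ℕ)) - C (pt (k := k) ((2 : Fin 3), (0 : ℕ))) := by
    simp [pt]
  rw [this]; exact Ideal.subset_span ⟨_, rfl⟩

theorem mem_G2_x1 : (X ((0 : Fin 3), (0 : ℕ)) : DP k 3) - 1 ∈ Ideal.span (G2 (k := k)) := by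
  have : (X ((0 : Fin 3), (0 : ℕ)) : DP k 3) - 1
      = X ((0 : Fin 3), (0 : ℕ)) - C (pt (k := k) ((0 : Fin 3), (0 : ℕ))) := by
    simp [pt]
  rw [this]; exact Ideal.subset_span ⟨_, rfl⟩

theorem A_subset_G2 {A : Finset (DP k 3)}
    (hA : (↑A : Set (DP k 3)) = {X ((0 : Fin 3), (0 : ℕ)) * (X ((0 : Fin 3), (0 : ℕ)) - 1),
      X ((0 : Fin 3), (0 : ℕ)) * X ((1 : Fin 3), (0 : ℕ)),
      X ((0 : Fin 3), (0 : ℕ)) * X ((2 : Fin 3), (0 : ℕ))}) :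
    (↑A : Set (DP k 3)) ⊆ (Ideal.span (G2 (k := k)) : Set (DP k 3)) := by
  rw [hA]
  rintro f (rfl | rfl | rfl)
  · exact Ideal.mul_mem_left _ _ mem_G2_x1
  · exact Ideal.mul_mem_left _ _ mem_G2_y
  · exact Ideal.mul_mem_left _ _ mem_G2_z

theorem coprime_G1_G2 :
    Ideal.span (G1 (k := k)) ⊔ Ideal.span (G2 (k := k)) = ⊤ := by
  rw [Ideal.eq_top_iff_one]
  have hx : (X ((0 : Fin 3), (0 : ℕ)) : DP k 3)
      ∈ Ideal.span (G1 (k := k)) ⊔ Ideal.span (G2 (k := k)) :=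
    Ideal.mem_sup_left (Ideal.subset_span ⟨0, rfl⟩)
  have hx1 : (X ((0 : Fin 3), (0 : ℕ)) : DP k 3) - 1
      ∈ Ideal.span (G1 (k := k)) ⊔ Ideal.span (G2 (k := k)) :=
    Ideal.mem_sup_right mem_G2_x1
  have := sub_mem hx hx1
  simpa using this

variable {δ : k → k} {D : DP k 3 → DP k 3}

/-- Membership chase inside `{A}`. -/
theorem key_memberships (hD : IsDeriv δ D) {J : Ideal (DP k 3)}
    (hJd : IsDiffIdeal1 D J)
    (hA1 : X ((0 : Fin 3), (0 : ℕ)) * (X ((0 : Fin 3), (0 : ℕ)) - 1) ∈ J)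
    (hA2 : X ((0 : Fin 3), (0 : ℕ)) * X ((1 : Fin 3), (0 : ℕ)) ∈ J)
    (hA3 : X ((0 : Fin 3), (0 : ℕ)) * X ((2 : Fin 3), (0 : ℕ)) ∈ J) :
    (∀ n : ℕ, X ((0 : Fin 3), n + 1) ∈ J) ∧
    (∀ n : ℕ, X ((0 : Fin 3), (0 : ℕ)) * X ((1 : Fin 3), n) ∈ J) ∧
    (∀ n : ℕ, X ((0 : Fin 3), (0 : ℕ)) * X ((2 : Fin 3), n) ∈ J) := by
  set x : DP k 3 := X ((0 : Fin 3), (0 : ℕ)) with hxdef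
  set t : DP k 3 := X ((0 : Fin 3), (1 : ℕ)) with htdef
  have hDx : D x = t := hD.map_X _
  have hDx1 : D (x - 1) = t := by rw [D_sub hD, D_one hD, sub_zero, hDx]
  have hE : x * t + (x - 1) * t ∈ J := by
    have : D (x * (x - 1)) ∈ J := hJd () _ hA1
    rwa [hD.leibniz, hDx, hDx1] at this
  have ht : t ∈ J := by
    have heq : t = 2 * (x * (x * t + (x - 1) * t)) - 4 * ((x * (x - 1)) * t)
        - (x * t + (x - 1) * t) := by ring
    rw [heq]
    exact sub_mem (sub_mem (Ideal.mul_mem_left _ _ (Ideal.mul_mem_left _ _ hE))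
      (Ideal.mul_mem_left _ _ (Ideal.mul_mem_right _ _ hA1))) hE
  have hxn : ∀ n : ℕ, X ((0 : Fin 3), n + 1) ∈ J := by
    intro n
    have := iterate_mem hJd ht n
    rwa [htdef, D_iter_X hD, Nat.add_comm 1 n] at this
  refine ⟨hxn, ?_, ?_⟩
  · intro n
    induction n with
    | zero => exact hA2
    | succ n ih =>
      have hstep : D (x * X ((1 : Fin 3), n)) ∈ J := hJd () _ ih
      rw [hD.leibniz, hD.map_X, hDx] at hstep
      have h2 : X ((1 : Fin 3), n) * t ∈ J := Ideal.mul_mem_left _ _ ht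
      have := sub_mem hstep h2
      simpa using this
  · intro n
    induction n with
    | zero => exact hA3
    | succ n ih =>
      have hstep : D (x * X ((2 : Fin 3), n)) ∈ J := hJd () _ ih
      rw [hD.leibniz, hD.map_X, hDx] at hstep
      have h2 : X ((2 : Fin 3), n) * t ∈ J := Ideal.mul_mem_left _ _ ht
      have := sub_mem hstep h2
      simpa using this

theorem radDiffIdeal_isDiff' {A : Finset (DP k 3)} :
    IsDiffIdeal1 D (radDiffIdeal1 D (↑A : Set (DP k 3))) :=
  radDiffIdeal1_isDiff D _

/-- `{A} = span G1 ⊓ span G2`. -/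
theorem radDecomp (hδ : IsFieldDeriv δ) (hD : IsDeriv δ D) {A : Finset (DP k 3)}
    (hA : (↑A : Set (DP k 3)) = {X ((0 : Fin 3), (0 : ℕ)) * (X ((0 : Fin 3), (0 : ℕ)) - 1),
      X ((0 : Fin 3), (0 : ℕ)) * X ((1 : Fin 3), (0 : ℕ)),
      X ((0 : Fin 3), (0 : ℕ)) * X ((2 : Fin 3), (0 : ℕ))}) :
    radDiffIdeal1 D (↑A : Set (DP k 3))
      = Ideal.span (G1 (k := k)) ⊓ Ideal.span (G2 (k := k)) := by
  apply le_antisymm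
  · exact le_inf
      (radDiffIdeal1_le (A_subset_G1 hA) (span_G1_isDiff hD) span_G1_prime.isRadical)
      (radDiffIdeal1_le (A_subset_G2 hA) (span_G2_isDiff hδ hD) span_G2_prime.isRadical)
  · set J := radDiffIdeal1 D (↑A : Set (DP k 3)) with hJ
    have hsub := subset_radDiffIdeal1 D (↑A : Set (DP k 3))
    have hA1 : X ((0 : Fin 3), (0 : ℕ)) * (X ((0 : Fin 3), (0 : ℕ)) - 1) ∈ J :=
      hsub (by rw [hA]; exact Set.mem_insert _ _)
    have hA2 : X ((0 : Fin 3), (0 : ℕ)) * X ((1 : Fin 3), (0 : ℕ)) ∈ J :=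
      hsub (by rw [hA]; exact Set.mem_insert_of_mem _ (Set.mem_insert _ _))
    have hA3 : X ((0 : Fin 3), (0 : ℕ)) * X ((2 : Fin 3), (0 : ℕ)) ∈ J :=
      hsub (by rw [hA]; exact Set.mem_insert_of_mem _ (Set.mem_insert_of_mem _ rfl))
    obtain ⟨hxn, hyn, hzn⟩ := key_memberships hD (radDiffIdeal1_isDiff D _) hA1 hA2 hA3
    rw [← Ideal.mul_eq_inf_of_coprime coprime_G1_G2, Ideal.span_mul_span, Ideal.span_le]
    rintro f hf
    rw [Set.mem_mul] at hf
    obtain ⟨s, ⟨m, rfl⟩, u, ⟨u, rfl⟩, rfl⟩ := hf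
    rcases m with _ | m
    · -- s = x
      obtain ⟨i, n⟩ := u
      fin_cases i
      · rcases n with _ | n
        · show X ((0 : Fin 3), (0 : ℕ))
            * (X ((0 : Fin 3), (0 : ℕ)) - C (pt (k := k) ((0 : Fin 3), (0 : ℕ)))) ∈ J
          rw [show pt (k := k) ((0 : Fin 3), 0) = 1 from if_pos rfl, map_one]
          exact hA1
        · show X ((0 : Fin 3), (0 : ℕ))
            * (X ((0 : Fin 3), n + 1) - C (pt (k := k) ((0 : Fin 3), n + 1))) ∈ J
          have hpt : pt (k := k) ((0 : Fin 3), n + 1) = 0 := by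
            unfold pt
            rw [if_neg (by intro h; exact Nat.succ_ne_zero n (congrArg Prod.snd h))]
          rw [hpt, map_zero, sub_zero]
          exact Ideal.mul_mem_left _ _ (hxn n)
      · show X ((0 : Fin 3), (0 : ℕ))
          * (X ((1 : Fin 3), n) - C (pt (k := k) ((1 : Fin 3), n))) ∈ J
        have hpt : pt (k := k) ((1 : Fin 3), n) = 0 := by
          unfold pt
          rw [if_neg (by intro h; exact absurd (congrArg Prod.fst h) (show ¬((1 : Fin 3) = 0) by decide))]
        rw [hpt, map_zero, sub_zero]
        exact hyn n
      · show X ((0 : Fin 3), (0 : ℕ))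
          * (X ((2 : Fin 3), n) - C (pt (k := k) ((2 : Fin 3), n))) ∈ J
        have hpt : pt (k := k) ((2 : Fin 3), n) = 0 := by
          unfold pt
          rw [if_neg (by intro h; exact absurd (congrArg Prod.fst h) (show ¬((2 : Fin 3) = 0) by decide))]
        rw [hpt, map_zero, sub_zero]
        exact hzn n
    · -- s = x^(m+1)
      exact Ideal.mul_mem_right _ _ (hxn m)

/-! ### Explicit computations with the three generators -/

def aV : Fin 3 × ℕ := ((0 : Fin 3), (0 : ℕ))
def bV : Fin 3 × ℕ := ((1 : Fin 3), (0 : ℕ))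
def cV : Fin 3 × ℕ := ((2 : Fin 3), (0 : ℕ))

noncomputable def p1 (k : Type*) [Field k] : DP k 3 := X aV * (X aV - 1)
noncomputable def p2 (k : Type*) [Field k] : DP k 3 := X aV * X bV
noncomputable def p3 (k : Type*) [Field k] : DP k 3 := X aV * X cV

theorem p1_eq : p1 k = monomial (Finsupp.single aV 2) 1 - monomial (Finsupp.single aV 1) 1 := by
  rw [← X_pow_eq_monomial, ← X_pow_eq_monomial, pow_one, p1]; ring

theorem p2_eq : p2 k = monomial (Finsupp.single aV 1 + Finsupp.single bV 1) 1 := by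
  rw [p2, X, X, monomial_mul, one_mul]

theorem p3_eq : p3 k = monomial (Finsupp.single aV 1 + Finsupp.single cV 1) 1 := by
  rw [p3, X, X, monomial_mul, one_mul]

theorem single_two_ne_one : Finsupp.single aV 2 ≠ Finsupp.single aV 1 := by
  intro h
  have := congrArg (fun f : (Fin 3 × ℕ) →₀ ℕ => f aV) h
  simp only [Finsupp.single_eq_same] at this
  exact (by norm_num : (2 : ℕ) ≠ 1) this

theorem support_p1 :
    (p1 k).support = {Finsupp.single aV 2, Finsupp.single aV 1} := by
  classical
  ext m
  rw [mem_support_iff, p1_eq, coeff_sub, coeff_monomial, coeff_monomial]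
  constructor
  · intro h
    by_cases h2 : Finsupp.single aV 2 = m
    · exact Finset.mem_insert.mpr (Or.inl h2.symm)
    · by_cases h1 : Finsupp.single aV 1 = m
      · exact Finset.mem_insert.mpr (Or.inr (Finset.mem_singleton.mpr h1.symm))
      · rw [if_neg h2, if_neg h1] at h; simp at h
  · intro h
    rcases Finset.mem_insert.mp h with rfl | h
    · rw [if_pos rfl, if_neg (fun hh => single_two_ne_one hh.symm)]
      simp
    · rw [Finset.mem_singleton] at h
      subst h
      rw [if_pos rfl, if_neg (fun hh => single_two_ne_one hh)]
      simp

theorem support_p2 :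
    (p2 k).support = {Finsupp.single aV 1 + Finsupp.single bV 1} := by
  classical
  rw [p2_eq, support_monomial, if_neg (one_ne_zero)]

theorem support_p3 :
    (p3 k).support = {Finsupp.single aV 1 + Finsupp.single cV 1} := by
  classical
  rw [p3_eq, support_monomial, if_neg (one_ne_zero)]

theorem ab_ne : aV ≠ bV := by unfold aV bV; decide
theorem ac_ne : aV ≠ cV := by unfold aV cV; decide
theorem bc_ne : bV ≠ cV := by unfold bV cV; decide

theorem support_sab :
    (Finsupp.single aV 1 + Finsupp.single bV 1).support = {aV, bV} := by
  rw [Finsupp.support_add_eq (by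
    rw [Finsupp.support_single_ne_zero _ one_ne_zero,
      Finsupp.support_single_ne_zero _ one_ne_zero]
    simpa using (Finset.disjoint_singleton.mpr ab_ne))]
  rw [Finsupp.support_single_ne_zero _ one_ne_zero,
    Finsupp.support_single_ne_zero _ one_ne_zero]
  rfl

theorem support_sac :
    (Finsupp.single aV 1 + Finsupp.single cV 1).support = {aV, cV} := by
  rw [Finsupp.support_add_eq (by
    rw [Finsupp.support_single_ne_zero _ one_ne_zero,
      Finsupp.support_single_ne_zero _ one_ne_zero]
    simpa using (Finset.disjoint_singleton.mpr ac_ne))]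
  rw [Finsupp.support_single_ne_zero _ one_ne_zero,
    Finsupp.support_single_ne_zero _ one_ne_zero]
  rfl

theorem vars_p1 : (p1 k).vars = {aV} := by
  classical
  ext v
  rw [mem_vars]
  constructor
  · rintro ⟨d, hd, hv⟩
    rw [support_p1] at hd
    rcases Finset.mem_insert.mp hd with rfl | hd
    · rwa [Finsupp.support_single_ne_zero _ (by norm_num)] at hv
    · rw [Finset.mem_singleton] at hd; subst hd
      rwa [Finsupp.support_single_ne_zero _ (by norm_num)] at hv
  · intro hv
    rw [Finset.mem_singleton] at hv; subst hv
    exact ⟨Finsupp.single aV 2, by rw [support_p1]; exact Finset.mem_insert_self _ _,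
      by rw [Finsupp.support_single_ne_zero _ (by norm_num)]; exact Finset.mem_singleton_self _⟩

theorem vars_p2 : (p2 k).vars = {aV, bV} := by
  classical
  ext v
  rw [mem_vars]
  constructor
  · rintro ⟨d, hd, hv⟩
    rw [support_p2, Finset.mem_singleton] at hd; subst hd
    rwa [support_sab] at hv
  · intro hv
    exact ⟨_, by rw [support_p2]; exact Finset.mem_singleton_self _, by rwa [support_sab]⟩

theorem vars_p3 : (p3 k).vars = {aV, cV} := by
  classical
  ext v
  rw [mem_vars]
  constructor
  · rintro ⟨d, hd, hv⟩
    rw [support_p3, Finset.mem_singleton] at hd; subst hd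
    rwa [support_sac] at hv
  · intro hv
    exact ⟨_, by rw [support_p3]; exact Finset.mem_singleton_self _, by rwa [support_sac]⟩

theorem degreeOf_p1_a : (p1 k).degreeOf aV = 2 := by
  rw [degreeOf_eq_sup, support_p1]
  rw [Finset.sup_insert, Finset.sup_singleton]
  simp [Finsupp.single_eq_same]

theorem degreeOf_p2_a : (p2 k).degreeOf aV = 1 := by
  rw [degreeOf_eq_sup, support_p2, Finset.sup_singleton]
  simp [Finsupp.single_eq_same, Finsupp.single_apply, ab_ne, Ne.symm (ab_ne)]

theorem degreeOf_p2_b : (p2 k).degreeOf bV = 1 := by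
  rw [degreeOf_eq_sup, support_p2, Finset.sup_singleton]
  simp [Finsupp.single_eq_same, Finsupp.single_apply, ab_ne, Ne.symm (ab_ne)]

theorem degreeOf_p3_a : (p3 k).degreeOf aV = 1 := by
  rw [degreeOf_eq_sup, support_p3, Finset.sup_singleton]
  simp [Finsupp.single_eq_same, Finsupp.single_apply, ac_ne, Ne.symm (ac_ne)]

theorem degreeOf_p3_c : (p3 k).degreeOf cV = 1 := by
  rw [degreeOf_eq_sup, support_p3, Finset.sup_singleton]
  simp [Finsupp.single_eq_same, Finsupp.single_apply, ac_ne, Ne.symm (ac_ne)]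

theorem degreeOf_eq_zero_of_not_mem_vars {f : DP k 3} {v : Fin 3 × ℕ}
    (h : v ∉ f.vars) : f.degreeOf v = 0 := by
  rw [degreeOf_eq_sup]
  rw [show (0:ℕ) = ⊥ from rfl, Finset.sup_eq_bot_iff]
  intro m hm
  show m v = ⊥
  by_contra hne
  exact h ((mem_vars v).mpr ⟨m, hm, Finsupp.mem_support_iff.mpr hne⟩)

theorem mem_vars_of_degreeOf_pos {f : DP k 3} {v : Fin 3 × ℕ}
    (h : v ∈ f.vars) : 1 ≤ f.degreeOf v := by
  obtain ⟨m, hm, hv⟩ := (mem_vars v).mp h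
  rw [degreeOf_eq_sup]
  exact le_trans (Finsupp.mem_support_iff.mp hv |> Nat.one_le_iff_ne_zero.mpr)
    (Finset.le_sup (f := fun m => m v) hm)

/-! ### Ranking facts, leaders, initials, separants -/

variable {r : Ranking 3}

theorem le_iter (i : Fin 3) (m n : ℕ) (h : m ≤ n) : r.le (i, m) (i, n) := by
  obtain ⟨d, rfl⟩ := Nat.exists_eq_add_of_le h
  clear h
  induction d with
  | zero => exact r.le_refl _
  | succ d ih => exact r.le_trans _ _ _ ih (r.le_deriv (i, m + d))

theorem min_aV (hxy : rlt r.le aV bV) (hyz : rlt r.le bV cV) (v : Fin 3 × ℕ) :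
    r.le aV v := by
  obtain ⟨i, n⟩ := v
  fin_cases i
  · exact le_iter 0 0 n (Nat.zero_le n)
  · exact r.le_trans _ _ _ hxy.1 (le_iter 1 0 n (Nat.zero_le n))
  · exact r.le_trans _ _ _ (r.le_trans _ _ _ hxy.1 hyz.1) (le_iter 2 0 n (Nat.zero_le n))

theorem bV_le (hyz : rlt r.le bV cV) {v : Fin 3 × ℕ} (h : v.1 ≠ 0) : r.le bV v := by
  obtain ⟨i, n⟩ := v
  fin_cases i
  · exact absurd rfl h
  · exact le_iter 1 0 n (Nat.zero_le n)
  · exact r.le_trans _ _ _ hyz.1 (le_iter 2 0 n (Nat.zero_le n))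

theorem cV_le {n : ℕ} : r.le cV ((2 : Fin 3), n) := le_iter 2 0 n (Nat.zero_le n)

theorem not_rlt_self {u : Fin 3 × ℕ} : ¬ rlt r.le u u := fun h => h.2 rfl

theorem rlt_of_le_ne {u v : Fin 3 × ℕ} (h : r.le u v) (hne : u ≠ v) : rlt r.le u v := ⟨h, hne⟩

theorem not_rlt_of_rlt {u v : Fin 3 × ℕ} (h : rlt r.le u v) : ¬ rlt r.le v u := by
  rintro ⟨h1, h2⟩
  exact h.2 (r.le_antisymm _ _ h.1 h1)

theorem isLeader_unique {f : DP k 3} {u v : Fin 3 × ℕ}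
    (hu : IsLeader r.le f u) (hv : IsLeader r.le f v) : u = v :=
  r.le_antisymm _ _ (hv.2 u hu.1) (hu.2 v hv.1)

theorem leader_eq {f : DP k 3} {u : Fin 3 × ℕ} (h : IsLeader r.le f u) :
    leader r.le f = u :=
  isLeader_unique (Classical.epsilon_spec (⟨u, h⟩ : ∃ v, IsLeader r.le f v)) h

theorem exists_rle_max (s : Finset (Fin 3 × ℕ)) (hs : s.Nonempty) :
    ∃ u ∈ s, ∀ v ∈ s, r.le v u := by
  classical
  induction s using Finset.induction_on with
  | empty => exact absurd hs (by simp)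
  | @insert a t ha ih =>
    rcases t.eq_empty_or_nonempty with rfl | ht
    · exact ⟨a, Finset.mem_insert_self _ _, by
        intro v hv
        rw [Finset.mem_insert] at hv
        rcases hv with rfl | hv
        · exact r.le_refl _
        · simp at hv⟩
    · obtain ⟨m, hm, hmax⟩ := ih ht
      rcases r.le_total a m with h | h
      · exact ⟨m, Finset.mem_insert_of_mem hm, by
          intro v hv
          rcases Finset.mem_insert.mp hv with rfl | hv
          · exact h
          · exact hmax v hv⟩
      · exact ⟨a, Finset.mem_insert_self _ _, by
          intro v hv
          rcases Finset.mem_insert.mp hv with rfl | hv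
          · exact r.le_refl _
          · exact r.le_trans _ _ _ (hmax v hv) h⟩

theorem isLeader_leader {f : DP k 3} (hf : f.vars.Nonempty) :
    IsLeader r.le f (leader r.le f) := by
  obtain ⟨u, hu, hmax⟩ := exists_rle_max (r := r) f.vars hf
  exact Classical.epsilon_spec (⟨u, hu, hmax⟩ : ∃ v, IsLeader r.le f v)

theorem leader_p1 : leader r.le (p1 k) = aV :=
  leader_eq ⟨by rw [vars_p1]; exact Finset.mem_singleton_self _, by
    intro v hv
    rw [vars_p1, Finset.mem_singleton] at hv
    subst hv; exact r.le_refl _⟩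

theorem leader_p2 (hxy : rlt r.le aV bV) : leader r.le (p2 k) = bV :=
  leader_eq ⟨by rw [vars_p2]; exact Finset.mem_insert_of_mem (Finset.mem_singleton_self _), by
    intro v hv
    rw [vars_p2, Finset.mem_insert, Finset.mem_singleton] at hv
    rcases hv with rfl | rfl
    · exact hxy.1
    · exact r.le_refl _⟩

theorem leader_p3 (hxy : rlt r.le aV bV) (hyz : rlt r.le bV cV) :
    leader r.le (p3 k) = cV :=
  leader_eq ⟨by rw [vars_p3]; exact Finset.mem_insert_of_mem (Finset.mem_singleton_self _), by
    intro v hv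
    rw [vars_p3, Finset.mem_insert, Finset.mem_singleton] at hv
    rcases hv with rfl | rfl
    · exact r.le_trans _ _ _ hxy.1 hyz.1
    · exact r.le_refl _⟩

theorem coeff_p1_s2 : coeff (Finsupp.single aV 2) (p1 k) = 1 := by
  rw [p1_eq, coeff_sub, coeff_monomial, coeff_monomial, if_pos rfl,
    if_neg single_two_ne_one.symm]
  norm_num

theorem initial_p1 : initial aV (p1 k) = 1 := by
  classical
  rw [initial, support_p1, degreeOf_p1_a]
  rw [Finset.filter_insert, if_pos (by simp [Finsupp.single_eq_same]),
    Finset.filter_singleton, if_neg (by simp [Finsupp.single_eq_same])]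
  rw [Finset.sum_insert (Finset.notMem_empty _), Finset.sum_empty, add_zero,
    coeff_p1_s2, Finsupp.erase_single]
  simp [monomial_zero']

theorem initial_p2 : initial bV (p2 k) = X aV := by
  classical
  rw [initial, support_p2, degreeOf_p2_b]
  rw [Finset.filter_singleton, if_pos (by
    rw [Finsupp.add_apply, Finsupp.single_eq_same, Finsupp.single_apply, if_neg ab_ne])]
  rw [Finset.sum_singleton, p2_eq, coeff_monomial, if_pos rfl,
    Finsupp.erase_add, Finsupp.erase_single, Finsupp.erase_single_ne (Ne.symm ab_ne),
    add_zero]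
  rw [X]

theorem initial_p3 : initial cV (p3 k) = X aV := by
  classical
  rw [initial, support_p3, degreeOf_p3_c]
  rw [Finset.filter_singleton, if_pos (by
    rw [Finsupp.add_apply, Finsupp.single_eq_same, Finsupp.single_apply, if_neg ac_ne])]
  rw [Finset.sum_singleton, p3_eq, coeff_monomial, if_pos rfl,
    Finsupp.erase_add, Finsupp.erase_single, Finsupp.erase_single_ne (Ne.symm ac_ne),
    add_zero]
  rw [X]

theorem separant_p1 : separant r.le (p1 k) = 2 * X aV - 1 := by
  rw [separant, leader_p1, p1]
  rw [pderiv_mul, pderiv_X_self, map_sub, pderiv_X_self, pderiv_one]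
  ring

theorem separant_p2 (hxy : rlt r.le aV bV) : separant r.le (p2 k) = X aV := by
  rw [separant, leader_p2 hxy, p2, pderiv_mul, pderiv_X, pderiv_X]
  rw [Pi.single_eq_same, Pi.single_eq_of_ne ab_ne]
  ring

theorem separant_p3 (hxy : rlt r.le aV bV) (hyz : rlt r.le bV cV) :
    separant r.le (p3 k) = X aV := by
  rw [separant, leader_p3 hxy hyz, p3, pderiv_mul, pderiv_X, pderiv_X]
  rw [Pi.single_eq_same, Pi.single_eq_of_ne ac_ne]
  ring

/-! ### Rank facts and autoreducedness of `A` -/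

theorem rankOf_p1 : rankOf r.le (p1 k) = (aV, 2) := by
  rw [rankOf, leader_p1, degreeOf_p1_a]

theorem rankOf_p2 (hxy : rlt r.le aV bV) : rankOf r.le (p2 k) = (bV, 1) := by
  rw [rankOf, leader_p2 hxy, degreeOf_p2_b]

theorem rankOf_p3 (hxy : rlt r.le aV bV) (hyz : rlt r.le bV cV) :
    rankOf r.le (p3 k) = (cV, 1) := by
  rw [rankOf, leader_p3 hxy hyz, degreeOf_p3_c]

theorem p1_ne_p2 : p1 k ≠ p2 k := by
  intro h
  have hb : bV ∈ (p2 k).vars := by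
    rw [vars_p2]; exact Finset.mem_insert_of_mem (Finset.mem_singleton_self _)
  rw [← h, vars_p1, Finset.mem_singleton] at hb
  exact ab_ne hb.symm

theorem p1_ne_p3 : p1 k ≠ p3 k := by
  intro h
  have hb : cV ∈ (p3 k).vars := by
    rw [vars_p3]; exact Finset.mem_insert_of_mem (Finset.mem_singleton_self _)
  rw [← h, vars_p1, Finset.mem_singleton] at hb
  exact ac_ne hb.symm

theorem p2_ne_p3 : p2 k ≠ p3 k := by
  intro h
  have hb : cV ∈ (p3 k).vars := by
    rw [vars_p3]; exact Finset.mem_insert_of_mem (Finset.mem_singleton_self _)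
  rw [← h, vars_p2, Finset.mem_insert, Finset.mem_singleton] at hb
  rcases hb with hb | hb
  · exact ac_ne hb.symm
  · exact bc_ne hb.symm

theorem vars_A_order_zero {f : DP k 3} (hf : f = p1 k ∨ f = p2 k ∨ f = p3 k) :
    ∀ v ∈ f.vars, v.2 = 0 := by
  intro v hv
  rcases hf with rfl | rfl | rfl
  · rw [vars_p1, Finset.mem_singleton] at hv; subst hv; rfl
  · rw [vars_p2, Finset.mem_insert, Finset.mem_singleton] at hv
    rcases hv with rfl | rfl <;> rfl
  · rw [vars_p3, Finset.mem_insert, Finset.mem_singleton] at hv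
    rcases hv with rfl | rfl <;> rfl

theorem autoreduced_A (hxy : rlt r.le aV bV) (hyz : rlt r.le bV cV)
    {A : Finset (DP k 3)} (hA : (↑A : Set (DP k 3)) = {p1 k, p2 k, p3 k}) :
    Autoreduced r.le properDeriv A := by
  have hmem : ∀ f ∈ A, f = p1 k ∨ f = p2 k ∨ f = p3 k := by
    intro f hf
    have : f ∈ (↑A : Set (DP k 3)) := hf
    rw [hA] at this
    simpa using this
  constructor
  · intro f hf
    rcases hmem f hf with rfl | rfl | rfl
    · rw [vars_p1]; exact ⟨aV, Finset.mem_singleton_self _⟩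
    · rw [vars_p2]; exact ⟨aV, Finset.mem_insert_self _ _⟩
    · rw [vars_p3]; exact ⟨aV, Finset.mem_insert_self _ _⟩
  · intro f hf g hg hne
    have hf := hmem f hf
    have hg := hmem g hg
    have hpr : PartiallyReducedWrt r.le properDeriv f g := by
      intro v hv
      rintro ⟨h1, h2⟩
      have hv0 : v.2 = 0 := vars_A_order_zero hf v hv
      have : (leader r.le g).2 = 0 := by
        rcases hg with rfl | rfl | rfl
        · rw [leader_p1]; rfl
        · rw [leader_p2 hxy]; rfl
        · rw [leader_p3 hxy hyz]; rfl
      omega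
    refine ⟨hpr, ?_⟩
    rcases hf with rfl | rfl | rfl <;> rcases hg with rfl | rfl | rfl
    · exact absurd rfl hne
    · rw [leader_p2 hxy, degreeOf_p2_b,
        degreeOf_eq_zero_of_not_mem_vars (by rw [vars_p1]; simp [Ne.symm ab_ne])]
      norm_num
    · rw [leader_p3 hxy hyz, degreeOf_p3_c,
        degreeOf_eq_zero_of_not_mem_vars (by rw [vars_p1]; simp [Ne.symm ac_ne])]
      norm_num
    · rw [leader_p1, degreeOf_p1_a, degreeOf_p2_a]; norm_num
    · exact absurd rfl hne
    · rw [leader_p3 hxy hyz, degreeOf_p3_c,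
        degreeOf_eq_zero_of_not_mem_vars
          (by rw [vars_p2]; simp [Ne.symm ac_ne, Ne.symm bc_ne])]
      norm_num
    · rw [leader_p1, degreeOf_p1_a, degreeOf_p3_a]; norm_num
    · rw [leader_p2 hxy, degreeOf_p2_b,
        degreeOf_eq_zero_of_not_mem_vars
          (by rw [vars_p3]; simp [ab_ne, Ne.symm ab_ne, bc_ne])]
      norm_num
    · exact absurd rfl hne

/-! ### Sorting an autoreduced set by rank -/

theorem rkLt_trans {u v w : (Fin 3 × ℕ) × ℕ} (h1 : rkLt r.le u v) (h2 : rkLt r.le v w) :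
    rkLt r.le u w := by
  rcases h1 with h1 | ⟨h1, h1'⟩ <;> rcases h2 with h2 | ⟨h2, h2'⟩
  · exact Or.inl ⟨r.le_trans _ _ _ h1.1 h2.1,
      fun he => h2.2 (r.le_antisymm _ _ h2.1 (he ▸ h1.1))⟩
  · exact Or.inl (h2 ▸ h1)
  · exact Or.inl (h1 ▸ h2)
  · exact Or.inr ⟨h1.trans h2, h1'.trans h2'⟩

theorem rkLt_irrefl {u : (Fin 3 × ℕ) × ℕ} : ¬ rkLt r.le u u := by
  rintro (h | ⟨-, h⟩)
  · exact h.2 rfl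
  · exact Nat.lt_irrefl _ h

theorem exists_rk_min (B : Finset (DP k 3))
    (htri : ∀ f ∈ B, ∀ g ∈ B, f ≠ g →
      rkLt r.le (rankOf r.le f) (rankOf r.le g) ∨ rkLt r.le (rankOf r.le g) (rankOf r.le f))
    (hB : B.Nonempty) :
    ∃ m ∈ B, ∀ f ∈ B, f ≠ m → rkLt r.le (rankOf r.le m) (rankOf r.le f) := by
  classical
  induction B using Finset.induction_on with
  | empty => exact absurd hB (by simp)
  | @insert a t ha ih =>
    rcases t.eq_empty_or_nonempty with rfl | ht
    · refine ⟨a, Finset.mem_insert_self _ _, ?_⟩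
      intro f hf hne
      rcases Finset.mem_insert.mp hf with rfl | hf
      · exact absurd rfl hne
      · simp at hf
    · obtain ⟨m, hm, hmin⟩ := ih (fun f hf g hg => htri f
        (Finset.mem_insert_of_mem hf) g (Finset.mem_insert_of_mem hg)) ht
      have ham : a ≠ m := fun h => ha (h ▸ hm)
      rcases htri a (Finset.mem_insert_self _ _) m (Finset.mem_insert_of_mem hm) ham with
        h | h
      · refine ⟨a, Finset.mem_insert_self _ _, ?_⟩
        intro f hf hne
        rcases Finset.mem_insert.mp hf with rfl | hf
        · exact absurd rfl hne
        · by_cases hfm : f = m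
          · exact hfm ▸ h
          · exact rkLt_trans h (hmin f hf hfm)
      · refine ⟨m, Finset.mem_insert_of_mem hm, ?_⟩
        intro f hf hne
        rcases Finset.mem_insert.mp hf with rfl | hf
        · exact h
        · exact hmin f hf hne

theorem exists_sorted_list (B : Finset (DP k 3))
    (htri : ∀ f ∈ B, ∀ g ∈ B, f ≠ g →
      rkLt r.le (rankOf r.le f) (rankOf r.le g) ∨ rkLt r.le (rankOf r.le g) (rankOf r.le f)) :
    ∃ L : List (DP k 3), L.Nodup ∧ (∀ f, f ∈ L ↔ f ∈ B) ∧
      (L.map (rankOf r.le)).Chain' (rkLt r.le) := by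
  classical
  induction B using Finset.strongInduction with
  | _ B ih =>
    rcases B.eq_empty_or_nonempty with rfl | hB
    · exact ⟨[], by simp; exact List.isChain_nil⟩
    · obtain ⟨m, hm, hmin⟩ := exists_rk_min B htri hB
      have hsub : B.erase m ⊂ B := Finset.erase_ssubset hm
      obtain ⟨L, hnd, hmem, hch⟩ := ih (B.erase m) hsub
        (fun f hf g hg => htri f (Finset.mem_of_mem_erase hf) g (Finset.mem_of_mem_erase hg))
      refine ⟨m :: L, ?_, ?_, ?_⟩
      · refine List.nodup_cons.mpr ⟨fun h => ?_, hnd⟩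
        exact (Finset.notMem_erase m B) ((hmem m).mp h)
      · intro f
        rw [List.mem_cons, hmem f, Finset.mem_erase]
        constructor
        · rintro (rfl | ⟨-, h⟩)
          · exact hm
          · exact h
        · intro hf
          by_cases hfm : f = m
          · exact Or.inl hfm
          · exact Or.inr ⟨hfm, hf⟩
      · rw [List.map_cons]; refine List.isChain_cons.mpr ?_
        refine ⟨?_, hch⟩
        intro y hy
        rcases L with _ | ⟨b, L'⟩
        · simp at hy
        · simp only [List.map_cons, List.head?_cons, Option.mem_def, Option.some.injEq] at hy
          subst hy
          have hbB := Finset.mem_of_mem_erase ((hmem b).mp (List.mem_cons_self))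
          have hbm : b ≠ m := (Finset.mem_erase.mp ((hmem b).mp (List.mem_cons_self))).1
          exact hmin b hbB hbm

/-! ### Minimality of the rank of `A` -/

theorem deg_ge_two {f : DP k 3} (h1 : f ∈ Ideal.span (G1 (k := k)))
    (h2 : f ∈ Ideal.span (G2 (k := k)))
    (hv : f.vars ⊆ {aV}) (hne : f.vars.Nonempty) : 2 ≤ degreeOf aV f := by
  classical
  by_contra hlt
  push_neg at hlt
  have hsupp : ∀ m ∈ f.support, m = 0 ∨ m = Finsupp.single aV 1 := by
    intro m hm
    have hms : ∀ w ∈ m.support, w = aV := fun w hw =>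
      Finset.mem_singleton.mp (hv ((mem_vars w).mpr ⟨m, hm, hw⟩))
    have hma : m aV ≤ 1 := by
      have h : m aV ≤ degreeOf aV f := by
        rw [degreeOf_eq_sup]
        exact Finset.le_sup (f := fun m => m aV) hm
      omega
    have hmeq : m = Finsupp.single aV (m aV) := by
      ext w
      by_cases hw : w = aV
      · subst hw; rw [Finsupp.single_eq_same]
      · rw [Finsupp.single_eq_of_ne' (fun h => hw h.symm)]
        by_contra h0
        exact hw (hms w (Finsupp.mem_support_iff.mpr h0))
    rcases Nat.le_one_iff_eq_zero_or_eq_one.mp hma with h0 | h0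
    · left; rw [hmeq, h0, Finsupp.single_zero]
    · right; rw [hmeq, h0]
  have hf : f = monomial 0 (coeff 0 f)
      + monomial (Finsupp.single aV 1) (coeff (Finsupp.single aV 1) f) := by
    have hons : (0 : (Fin 3 × ℕ) →₀ ℕ) ≠ Finsupp.single aV 1 := by
      intro h
      have := congrArg (fun g : (Fin 3 × ℕ) →₀ ℕ => g aV) h
      simp [Finsupp.single_eq_same] at this
    ext m
    rw [coeff_add, coeff_monomial, coeff_monomial]
    by_cases h0 : m = 0
    · subst h0; rw [if_pos rfl, if_neg (fun h => hons h.symm), add_zero]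
    · by_cases hs1 : m = Finsupp.single aV 1
      · subst hs1; rw [if_neg (fun h => hons h), if_pos rfl, zero_add]
      · rw [if_neg (fun h => h0 h.symm), if_neg (fun h => hs1 h.symm), add_zero]
        by_contra hc
        rcases hsupp m (mem_support_iff.mpr hc) with h | h
        · exact h0 h
        · exact hs1 h
  have hmon1 : monomial (Finsupp.single aV 1) (coeff (Finsupp.single aV 1) f)
      = C (coeff (Finsupp.single aV 1) f) * X aV := by
    rw [X, C_mul_monomial, mul_one]
  have e1 : phi1 (k := k) f = C (coeff 0 f) := by
    conv_lhs => rw [hf]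
    rw [map_add, hmon1, map_mul, phi1_X, if_pos (show aV.1 = 0 from rfl), mul_zero, add_zero,
      monomial_zero']
    show phi1 (k := k) (C (coeff 0 f)) = C (coeff 0 f)
    simp [phi1]
  have hc0 : coeff 0 f = 0 := by
    rw [span_G1_eq_ker, RingHom.mem_ker] at h1
    rw [h1] at e1
    exact (C_injective _ _ (by rw [← e1, map_zero])).symm
  have e2 : phi2 (k := k) f = coeff 0 f + coeff (Finsupp.single aV 1) f := by
    conv_lhs => rw [hf]
    rw [map_add, hmon1, map_mul, phi2_X, monomial_zero']
    show phi2 (k := k) (C (coeff 0 f)) + phi2 (k := k) (C _) * pt aV = _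
    simp [phi2, pt, aV]
  have hc1 : coeff (Finsupp.single aV 1) f = 0 := by
    rw [span_G2_eq_ker, RingHom.mem_ker] at h2
    rw [h2, hc0, zero_add] at e2
    exact e2.symm
  have hf0 : f = 0 := by rw [hf, hc0, hc1, map_zero, map_zero, add_zero]
  rw [hf0] at hne
  simp [vars_0] at hne

theorem var_case0 {v : Fin 3 × ℕ} (h : ¬ properDeriv v aV) (h0 : v.1 = 0) : v = aV := by
  unfold properDeriv at h
  push_neg at h
  have h2 : v.2 ≤ 0 := h (h0.trans rfl)
  exact Prod.ext (h0.trans rfl) (Nat.le_zero.mp h2)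

theorem var_case1 {v : Fin 3 × ℕ} (h : ¬ properDeriv v bV) (h0 : v.1 = 1) : v = bV := by
  unfold properDeriv at h
  push_neg at h
  have h2 : v.2 ≤ 0 := h (h0.trans rfl)
  exact Prod.ext (h0.trans rfl) (Nat.le_zero.mp h2)

theorem var_case2 {v : Fin 3 × ℕ} (h : ¬ properDeriv v cV) (h0 : v.1 = 2) : v = cV := by
  unfold properDeriv at h
  push_neg at h
  have h2 : v.2 ≤ 0 := h (h0.trans rfl)
  exact Prod.ext (h0.trans rfl) (Nat.le_zero.mp h2)

theorem fin3_cases (i : Fin 3) : i = 0 ∨ i = 1 ∨ i = 2 := by omega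

variable {δ : k → k} {D : DP k 3 → DP k 3}

theorem rank_min (hδ : IsFieldDeriv δ) (hD : IsDeriv δ D)
    (hxy : rlt r.le aV bV) (hyz : rlt r.le bV cV)
    {A B : Finset (DP k 3)}
    (hA : (↑A : Set (DP k 3)) = {p1 k, p2 k, p3 k})
    (hBred : Autoreduced r.le properDeriv B)
    (hBsub : (↑B : Set (DP k 3)) ⊆ (radDiffIdeal1 D (↑A : Set (DP k 3)) : Set (DP k 3))) :
    setRankLe r.le A B := by
  classical
  have hAf : ∀ f, f ∈ A ↔ (f = p1 k ∨ f = p2 k ∨ f = p3 k) := by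
    intro f
    rw [← Finset.mem_coe, hA]
    simp [Set.mem_insert_iff]
  have hdec : radDiffIdeal1 D (↑A : Set (DP k 3))
      = Ideal.span (G1 (k := k)) ⊓ Ideal.span (G2 (k := k)) :=
    radDecomp hδ hD hA
  have hBI : ∀ f ∈ B, f ∈ Ideal.span (G1 (k := k)) ∧ f ∈ Ideal.span (G2 (k := k)) := by
    intro f hf
    have h : f ∈ radDiffIdeal1 D (↑A : Set (DP k 3)) := hBsub hf
    rw [hdec, Submodule.mem_inf] at h
    exact h
  have hBne : ∀ f ∈ B, f.vars.Nonempty := hBred.1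
  have hBld : ∀ f ∈ B, ∀ g ∈ B, f ≠ g → leader r.le f ≠ leader r.le g := by
    intro f hf g hg hne heq
    have h1 := (hBred.2 f hf g hg hne).2
    have h2 := (hBred.2 g hg f hf (Ne.symm hne)).2
    rw [heq] at h2
    omega
  have htri : ∀ f ∈ B, ∀ g ∈ B, f ≠ g →
      rkLt r.le (rankOf r.le f) (rankOf r.le g)
        ∨ rkLt r.le (rankOf r.le g) (rankOf r.le f) := by
    intro f hf g hg hne
    have hld := hBld f hf g hg hne
    rcases r.le_total (leader r.le f) (leader r.le g) with h | h
    · exact Or.inl (Or.inl ⟨h, hld⟩)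
    · exact Or.inr (Or.inl ⟨h, Ne.symm hld⟩)
  obtain ⟨L, hLnd, hLmem, hLch⟩ := exists_sorted_list B htri
  have key1 : ∀ f ∈ B, leader r.le f = aV → 2 ≤ degreeOf aV f := by
    intro f hf hl
    have hne := hBne f hf
    have hIV := hBI f hf
    refine deg_ge_two hIV.1 hIV.2 ?_ hne
    intro v hv
    have h1 : r.le v aV := hl ▸ (isLeader_leader hne).2 v hv
    have h2 : r.le aV v := min_aV hxy hyz v
    exact Finset.mem_singleton.mpr (r.le_antisymm _ _ h1 h2)
  refine ⟨[p1 k, p2 k, p3 k], L, ?_, hLnd, ?_, fun f => hLmem f, ?_, hLch, ?_⟩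
  · simp [p1_ne_p2, p1_ne_p3, p2_ne_p3]
  · intro f
    rw [hAf f]
    simp
  · rw [List.map_cons, List.map_cons, List.map_cons, List.map_nil,
      rankOf_p1, rankOf_p2 hxy, rankOf_p3 hxy hyz]
    refine List.isChain_cons.mpr ⟨?_, List.isChain_cons.mpr ⟨?_, List.isChain_singleton _⟩⟩
    · intro y hy
      simp only [List.head?_cons, Option.mem_def, Option.some.injEq] at hy
      subst hy
      exact Or.inl hxy
    · intro y hy
      simp only [List.head?_cons, Option.mem_def, Option.some.injEq] at hy
      subst hy
      exact Or.inl hyz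
  · -- the rank comparison
    rcases L with _ | ⟨b1, L1⟩
    · left
      exact trivial
    · have hb1B : b1 ∈ B := (hLmem b1).mp (List.mem_cons_self)
      by_cases hc1 : leader r.le b1 = aV
      · -- leader of b1 is x
        have hd1 : 2 ≤ degreeOf aV b1 := key1 b1 hb1B hc1
        have hRb1 : rankOf r.le b1 = (aV, degreeOf aV b1) := by rw [rankOf, hc1]
        by_cases hd1e : degreeOf aV b1 = 2
        case neg =>
          left
          refine Or.inl ?_
          rw [rankOf_p1, hRb1]
          exact Or.inr ⟨rfl, lt_of_le_of_ne hd1 (Ne.symm hd1e)⟩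
        case pos =>
          have hR1 : rankOf r.le (p1 k) = rankOf r.le b1 := by
            rw [rankOf_p1, hRb1, hd1e]
          rcases L1 with _ | ⟨b2, L2⟩
          · left; exact Or.inr ⟨hR1, trivial⟩
          · have hb2B : b2 ∈ B := (hLmem b2).mp (by simp)
            have hb2ne1 : b2 ≠ b1 := by
              intro h
              subst h
              simp [List.nodup_cons] at hLnd
            have hred21 := hBred.2 b2 hb2B b1 hb1B hb2ne1
            have hv2 : ∀ v ∈ b2.vars, v.1 = 0 → v = aV := by
              intro v hv h0
              have := hred21.1 v hv
              rw [hc1] at this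
              exact var_case0 this h0
            have hl2mem : leader r.le b2 ∈ b2.vars := (isLeader_leader (hBne b2 hb2B)).1
            have hl2a : leader r.le b2 ≠ aV := by
              intro h
              have h2 := key1 b2 hb2B h
              have h3 := hred21.2
              rw [hc1, hd1e] at h3
              omega
            have hl2b : r.le bV (leader r.le b2) := by
              refine bV_le hyz (fun h0 => hl2a (hv2 _ hl2mem h0))
            by_cases hc2 : leader r.le b2 = bV
            · -- leader of b2 is y
              have hd2 : 1 ≤ degreeOf bV b2 := mem_vars_of_degreeOf_pos (hc2 ▸ hl2mem)
              have hRb2 : rankOf r.le b2 = (bV, degreeOf bV b2) := by rw [rankOf, hc2]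
              by_cases hd2e : degreeOf bV b2 = 1
              case neg =>
                left
                refine Or.inr ⟨hR1, Or.inl ?_⟩
                rw [rankOf_p2 hxy, hRb2]
                exact Or.inr ⟨rfl, lt_of_le_of_ne hd2 (Ne.symm hd2e)⟩
              case pos =>
                have hR2 : rankOf r.le (p2 k) = rankOf r.le b2 := by
                  rw [rankOf_p2 hxy, hRb2, hd2e]
                rcases L2 with _ | ⟨b3, L3⟩
                · left; exact Or.inr ⟨hR1, Or.inr ⟨hR2, trivial⟩⟩
                · have hb3B : b3 ∈ B := (hLmem b3).mp (by simp)
                  have hb3ne1 : b3 ≠ b1 := by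
                    intro h; subst h; simp [List.nodup_cons] at hLnd
                  have hb3ne2 : b3 ≠ b2 := by
                    intro h; subst h; simp [List.nodup_cons] at hLnd
                  have hred31 := hBred.2 b3 hb3B b1 hb1B hb3ne1
                  have hred32 := hBred.2 b3 hb3B b2 hb2B hb3ne2
                  have hl3mem : leader r.le b3 ∈ b3.vars :=
                    (isLeader_leader (hBne b3 hb3B)).1
                  have hl3a : leader r.le b3 ≠ aV := by
                    intro h
                    have h2 := key1 b3 hb3B h
                    have h3 := hred31.2
                    rw [hc1, hd1e] at h3
                    omega
                  have hl3b : leader r.le b3 ≠ bV := by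
                    intro h
                    have h2 : 1 ≤ degreeOf bV b3 := mem_vars_of_degreeOf_pos (h ▸ hl3mem)
                    have h3 := hred32.2
                    rw [hc2, hd2e] at h3
                    omega
                  have hl3c : (leader r.le b3).1 = 2 := by
                    rcases fin3_cases (leader r.le b3).1 with h | h | h
                    · exfalso
                      apply hl3a
                      have := hred31.1 _ hl3mem
                      rw [hc1] at this
                      exact var_case0 this h
                    · exfalso
                      apply hl3b
                      have := hred32.1 _ hl3mem
                      rw [hc2] at this
                      exact var_case1 this h
                    · exact h
                  have hl3le : r.le cV (leader r.le b3) := by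
                    rw [show leader r.le b3 = ((2 : Fin 3), (leader r.le b3).2) from
                      Prod.ext hl3c rfl]
                    exact cV_le
                  by_cases hc3 : leader r.le b3 = cV
                  · have hd3 : 1 ≤ degreeOf cV b3 :=
                      mem_vars_of_degreeOf_pos (hc3 ▸ hl3mem)
                    have hRb3 : rankOf r.le b3 = (cV, degreeOf cV b3) := by
                      rw [rankOf, hc3]
                    by_cases hd3e : degreeOf cV b3 = 1
                    case neg =>
                      left
                      refine Or.inr ⟨hR1, Or.inr ⟨hR2, Or.inl ?_⟩⟩
                      rw [rankOf_p3 hxy hyz, hRb3]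
                      exact Or.inr ⟨rfl, lt_of_le_of_ne hd3 (Ne.symm hd3e)⟩
                    case pos =>
                      have hR3 : rankOf r.le (p3 k) = rankOf r.le b3 := by
                        rw [rankOf_p3 hxy hyz, hRb3, hd3e]
                      rcases L3 with _ | ⟨b4, L4⟩
                      · right
                        simp only [List.map_cons, List.map_nil]
                        rw [hR1, hR2, hR3]
                      · exfalso
                        have hb4B : b4 ∈ B := (hLmem b4).mp (by simp)
                        have hb4ne1 : b4 ≠ b1 := by
                          intro h; subst h; simp [List.nodup_cons] at hLnd
                        have hb4ne2 : b4 ≠ b2 := by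
                          intro h; subst h; simp [List.nodup_cons] at hLnd
                        have hb4ne3 : b4 ≠ b3 := by
                          intro h; subst h; simp [List.nodup_cons] at hLnd
                        have hred41 := hBred.2 b4 hb4B b1 hb1B hb4ne1
                        have hred42 := hBred.2 b4 hb4B b2 hb2B hb4ne2
                        have hred43 := hBred.2 b4 hb4B b3 hb3B hb4ne3
                        have hl4mem : leader r.le b4 ∈ b4.vars :=
                          (isLeader_leader (hBne b4 hb4B)).1
                        rcases fin3_cases (leader r.le b4).1 with h | h | h
                        · have h4 : leader r.le b4 = aV := by
                            have := hred41.1 _ hl4mem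
                            rw [hc1] at this
                            exact var_case0 this h
                          have h2 := key1 b4 hb4B h4
                          have h3 := hred41.2
                          rw [hc1, hd1e] at h3
                          omega
                        · have h4 : leader r.le b4 = bV := by
                            have := hred42.1 _ hl4mem
                            rw [hc2] at this
                            exact var_case1 this h
                          have h2 : 1 ≤ degreeOf bV b4 :=
                            mem_vars_of_degreeOf_pos (h4 ▸ hl4mem)
                          have h3 := hred42.2
                          rw [hc2, hd2e] at h3
                          omega
                        · have h4 : leader r.le b4 = cV := by
                            have := hred43.1 _ hl4mem
                            rw [hc3] at this
                            exact var_case2 this h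
                          have h2 : 1 ≤ degreeOf cV b4 :=
                            mem_vars_of_degreeOf_pos (h4 ▸ hl4mem)
                          have h3 := hred43.2
                          rw [hc3, hd3e] at h3
                          omega
                  · left
                    refine Or.inr ⟨hR1, Or.inr ⟨hR2, Or.inl ?_⟩⟩
                    rw [rankOf_p3 hxy hyz]
                    exact Or.inl ⟨hl3le, fun h => hc3 h.symm⟩
            · -- leader of b2 is above y
              left
              refine Or.inr ⟨hR1, Or.inl ?_⟩
              rw [rankOf_p2 hxy]
              exact Or.inl ⟨hl2b, fun h => hc2 h.symm⟩
      · -- leader of b1 is not x : strictly above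
        left
        refine Or.inl ?_
        rw [rankOf_p1]
        exact Or.inl ⟨min_aV hxy hyz _, fun h => hc1 h.symm⟩

/-! ### Evaluation of `H_A` and the consistency statement -/

theorem Hset_phi2 (hxy : rlt r.le aV bV) (hyz : rlt r.le bV cV) {A : Finset (DP k 3)}
    (hA : (↑A : Set (DP k 3)) = {p1 k, p2 k, p3 k}) :
    phi2 (k := k) (Hset r.le A) = 1 := by
  classical
  have hAeq : A = ({p1 k, p2 k, p3 k} : Finset (DP k 3)) :=
    Finset.coe_injective (by rw [hA]; simp)
  rw [Hset, hAeq, Finset.prod_insert (by simp [p1_ne_p2, p1_ne_p3]),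
    Finset.prod_insert (by simp [p2_ne_p3]), Finset.prod_singleton]
  rw [leader_p1, leader_p2 hxy, leader_p3 hxy hyz, initial_p1, initial_p2, initial_p3,
    separant_p1, separant_p2 hxy, separant_p3 hxy hyz]
  simp [phi2, pt, aV]
  norm_num

theorem one_not_sat (hδ : IsFieldDeriv δ) (hD : IsDeriv δ D)
    (hxy : rlt r.le aV bV) (hyz : rlt r.le bV cV) {A : Finset (DP k 3)}
    (hA : (↑A : Set (DP k 3)) = {p1 k, p2 k, p3 k}) :
    (1 : DP k 3) ∉ sat (diffIdeal1 D (↑A : Set (DP k 3))) {Hset r.le A} := by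
  rintro ⟨s, hs, hmem⟩
  rw [Submonoid.mem_closure_singleton] at hs
  obtain ⟨n, rfl⟩ := hs
  have hsub : diffIdeal1 D (↑A : Set (DP k 3)) ≤ Ideal.span (G2 (k := k)) :=
    diffIdeal1_le (A_subset_G2 hA) (span_G2_isDiff hδ hD)
  have h2 : (Hset r.le A) ^ n * 1 ∈ Ideal.span (G2 (k := k)) := hsub hmem
  rw [span_G2_eq_ker, RingHom.mem_ker, mul_one, map_pow, Hset_phi2 hxy hyz hA,
    one_pow] at h2
  exact one_ne_zero h2

theorem not_le_12 : ¬ Ideal.span (G1 (k := k)) ≤ Ideal.span (G2 (k := k)) := by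
  intro h
  have hx : (X aV : DP k 3) ∈ Ideal.span (G1 (k := k)) := Ideal.subset_span ⟨0, rfl⟩
  have h2 := h hx
  rw [span_G2_eq_ker, RingHom.mem_ker, phi2_X,
    show pt (k := k) aV = 1 from if_pos rfl] at h2
  exact one_ne_zero h2

theorem not_le_21 : ¬ Ideal.span (G2 (k := k)) ≤ Ideal.span (G1 (k := k)) := by
  intro h
  have hy := h (mem_G2_y (k := k))
  rw [span_G1_eq_ker, RingHom.mem_ker, phi1_X,
    if_neg (show ¬(((1 : Fin 3), (0 : ℕ)).1 = 0) by decide)] at hy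
  exact X_ne_zero _ hy

end S10

end Aux

/-- In `k{x,y,z}` let `A = {x(x−1), xy, xz}` and fix a ranking with `x < y < z`.  Then
(1) `1 ∉ [A]:H_A^∞`; (2) `{A} = [x] ∩ [x−1, y, z]` is a minimal prime decomposition;
(3) `A` is a characteristic set of `{A}`, so `{A}` satisfies the property of consistency. -/
theorem statement10 {k : Type*} [Field k] [CharZero k]
    (δ : k → k) (hδ : IsFieldDeriv δ)
    (D : DP k 3 → DP k 3) (hD : IsDeriv δ D)
    (x y z : DP k 3) (hx : x = X ((0 : Fin 3), (0 : ℕ)))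
    (hy : y = X ((1 : Fin 3), (0 : ℕ))) (hz : z = X ((2 : Fin 3), (0 : ℕ)))
    (A : Finset (DP k 3)) (hA : (↑A : Set (DP k 3)) = {x * (x - 1), x * y, x * z})
    (r : Ranking 3)
    (hxy : rlt r.le ((0 : Fin 3), (0 : ℕ)) ((1 : Fin 3), (0 : ℕ)))
    (hyz : rlt r.le ((1 : Fin 3), (0 : ℕ)) ((2 : Fin 3), (0 : ℕ))) :
    -- (1)
    (1 : DP k 3) ∉ sat (diffIdeal1 D ↑A) {Hset r.le A} ∧
    -- (2): minimal prime decomposition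
    (diffIdeal1 D {x}).IsPrime ∧ (diffIdeal1 D {x - 1, y, z}).IsPrime ∧
    radDiffIdeal1 D ↑A = diffIdeal1 D {x} ⊓ diffIdeal1 D {x - 1, y, z} ∧
    ¬ diffIdeal1 D {x} ≤ diffIdeal1 D {x - 1, y, z} ∧
    ¬ diffIdeal1 D {x - 1, y, z} ≤ diffIdeal1 D {x} ∧
    -- (3): `A` is a characteristic set, and the property of consistency holds
    IsCharSet r.le properDeriv (radDiffIdeal1 D ↑A : Set (DP k 3)) A ∧
    ∃ C : Finset (DP k 3),
      IsCharSet r.le properDeriv (radDiffIdeal1 D ↑A : Set (DP k 3)) C ∧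
      (1 : DP k 3) ∉ sat (diffIdeal1 D ↑C) {Hset r.le C} := by
  subst hx hy hz
  have hA' : (↑A : Set (DP k 3)) = {S10.p1 k, S10.p2 k, S10.p3 k} := hA
  have hxy' : rlt r.le S10.aV S10.bV := hxy
  have hyz' : rlt r.le S10.bV S10.cV := hyz
  have hsub : (↑A : Set (DP k 3)) ⊆ (radDiffIdeal1 D (↑A : Set (DP k 3)) : Set (DP k 3)) :=
    S10.subset_radDiffIdeal1 _ _
  have hcs : IsCharSet r.le properDeriv
      (radDiffIdeal1 D (↑A : Set (DP k 3)) : Set (DP k 3)) A :=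
    ⟨S10.autoreduced_A hxy' hyz' hA', hsub,
      fun B hB hBsub => S10.rank_min hδ hD hxy' hyz' hA' hB hBsub⟩
  refine ⟨?_, ?_, ?_, ?_, ?_, ?_, hcs, ⟨A, hcs, ?_⟩⟩
  · exact S10.one_not_sat hδ hD hxy' hyz' hA'
  · rw [S10.diffIdeal1_x hD]; exact S10.span_G1_prime
  · rw [S10.diffIdeal1_xyz hδ hD]; exact S10.span_G2_prime
  · rw [S10.diffIdeal1_x hD, S10.diffIdeal1_xyz hδ hD]
    exact S10.radDecomp hδ hD hA'
  · rw [S10.diffIdeal1_x hD, S10.diffIdeal1_xyz hδ hD]; exact S10.not_le_12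
  · rw [S10.diffIdeal1_x hD, S10.diffIdeal1_xyz hδ hD]; exact S10.not_le_21
  · exact S10.one_not_sat hδ hD hxy' hyz' hA'

end DiffAlg
end
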